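/- arXiv:2007.04312 — 9 statements merged into one kernel-verified Lean document; each statement's English description precedes it below -/
import Mathlib

section
/- Let b ≥ 2 be an integer, λ ∈ (1/b, 1), and φ(x) = cos(2πx + θ) for some θ ∈ ℝ. Then the function W(x) = ∑_{n=0}^∞ λ^n φ(b^n x) is not real analytic. (More precisely: W cannot have exponentially decaying Fourier coefficients, since the b^k-th Fourier coefficient of W has absolute value (λ^k + 1)/2, which does not tend to 0 as k → ∞.) -/
/-!
Integrating the series term by term against `cos (2π bᵏ x + θ)` and using orthogonality of the
cosines, the `bᵏ`-th cosine coefficient of `W` is `λᵏ / 2`. For a `C¹` function `g` with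
`g 1 = g 0`, integrating by parts bounds `m` times its `m`-th cosine coefficient by
`sup |g'| / 2π`. Since `bλ > 1`, `bᵏ λᵏ / 2` is unbounded, so `W` is not even `C¹`.
-/

open Real intervalIntegral

lemma sin_two_pi_nat_mul_add (m : ℕ) (θ : ℝ) : sin (2 * π * m + θ) = sin θ := by
  rw [add_comm, mul_comm (2 * π)]
  exact sin_add_nat_mul_two_pi θ m

lemma cos_two_pi_nat_mul_add (m : ℕ) (θ : ℝ) : cos (2 * π * m + θ) = cos θ := by
  rw [add_comm, mul_comm (2 * π)]
  exact cos_add_nat_mul_two_pi θ m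

lemma integral_cos_two_pi_int_mul_add {m : ℤ} (hm : m ≠ 0) (c : ℝ) :
    ∫ x in (0 : ℝ)..1, cos (2 * π * (m * x) + c) = 0 := by
  have hm' : 2 * π * m ≠ 0 := by simp [pi_ne_zero, hm]
  simp_rw [← mul_assoc]
  rw [integral_comp_mul_add cos hm', integral_cos, mul_one, mul_zero, zero_add, add_comm,
    mul_comm (2 * π) (m : ℝ), sin_add_int_mul_two_pi, sub_self, smul_zero]

lemma integral_cos_mul_cos_two_pi_nat (m : ℕ) {n : ℕ} (hn : n ≠ 0) (θ : ℝ) :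
    ∫ x in (0 : ℝ)..1, cos (2 * π * (m * x) + θ) * cos (2 * π * (n * x) + θ) =
      if m = n then 1 / 2 else 0 := by
  have product_to_sum : ∀ x : ℝ, cos (2 * π * (m * x) + θ) * cos (2 * π * (n * x) + θ) =
      (cos (2 * π * (((m - n : ℤ) : ℝ) * x) + 0) +
        cos (2 * π * (((m + n : ℤ) : ℝ) * x) + 2 * θ)) / 2 := fun x => by
    rw [eq_div_iff two_ne_zero, mul_comm, ← mul_assoc, two_mul_cos_mul_cos]
    push_cast
    ring_nf
  simp_rw [product_to_sum]
  rw [integral_div, integral_add (Continuous.intervalIntegrable (by fun_prop) _ _)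
    (Continuous.intervalIntegrable (by fun_prop) _ _),
    integral_cos_two_pi_int_mul_add (m := m + n) (by omega)]
  split_ifs with hmn
  · simp [hmn]
  · rw [integral_cos_two_pi_int_mul_add (by omega)]
    simp

lemma integral_tsum_mul_cos_two_pi {a : ℕ → ℝ} (ha : Summable fun n => |a n|) {ω : ℕ → ℕ}
    (hω : Function.Injective ω) (hω0 : ∀ n, ω n ≠ 0) (θ : ℝ) (k : ℕ) :
    ∫ x in (0 : ℝ)..1,
      (∑' n, a n * cos (2 * π * (ω n * x) + θ)) * cos (2 * π * (ω k * x) + θ) = a k / 2 := by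
  set e : ℕ → ℝ → ℝ := fun n x => cos (2 * π * (ω n * x) + θ)
  have term_le : ∀ n x, ‖a n * e n x‖ ≤ |a n| := fun n x => by
    rw [norm_mul, norm_eq_abs, norm_eq_abs]
    exact mul_le_of_le_one_right (abs_nonneg _) (abs_cos_le_one _)
  have hterm : ∀ n, ∫ x in (0 : ℝ)..1, a n * (e n x * e k x) =
      if n = k then a k / 2 else 0 := fun n => by
    rw [integral_const_mul, integral_cos_mul_cos_two_pi_nat _ (hω0 k)]
    simp only [hω.eq_iff]
    split_ifs with h
    · rw [h, mul_one_div]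
    · rw [mul_zero]
  have hsum : HasSum (fun n => ∫ x in (0 : ℝ)..1, a n * (e n x * e k x))
      (∫ x in (0 : ℝ)..1, (∑' n, a n * e n x) * e k x) := by
    refine hasSum_integral_of_dominated_convergence (fun n _ => |a n|)
      (fun n => (Continuous.aestronglyMeasurable (by fun_prop)))
      (fun n => .of_forall fun x _ => ?_) (.of_forall fun _ _ => ha)
      intervalIntegrable_const (.of_forall fun x _ => ?_)
    · rw [← mul_assoc]
      exact (norm_mul_le _ _).trans
        (mul_le_of_le_one_right (norm_nonneg _) (by simpa using abs_cos_le_one _) |>.trans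
          (term_le n x))
    · simp_rw [← mul_assoc]
      exact ((Summable.of_norm_bounded ha (term_le · x)).hasSum).mul_right _
  simp_rw [hterm] at hsum
  exact ((hasSum_ite_eq k (a k / 2)).unique hsum).symm

lemma two_pi_mul_integral_mul_cos_eq_neg_integral_deriv_mul_sin {g : ℝ → ℝ}
    (hg : ContDiff ℝ 1 g) (hper : g 1 = g 0) (m : ℕ) (θ : ℝ) :
    2 * π * m * ∫ x in (0 : ℝ)..1, g x * cos (2 * π * (m * x) + θ) =
      -∫ x in (0 : ℝ)..1, deriv g x * sin (2 * π * (m * x) + θ) := by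
  have hv : ∀ x : ℝ, HasDerivAt (fun x => sin (2 * π * (m * x) + θ))
      (cos (2 * π * (m * x) + θ) * (2 * π * m)) x := fun x => by
    simpa using (((hasDerivAt_id x).const_mul (m : ℝ)).const_mul (2 * π) |>.add_const θ).sin
  have parts := integral_mul_deriv_eq_deriv_mul (a := 0) (b := 1)
    (fun x _ => (hg.differentiable one_ne_zero x).hasDerivAt) (fun x _ => hv x)
    ((hg.continuous_deriv le_rfl).intervalIntegrable _ _)
    (Continuous.intervalIntegrable (by fun_prop) _ _)
  simp only [mul_one, mul_zero, zero_add, hper, sin_two_pi_nat_mul_add, sub_self, zero_sub]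
    at parts
  rw [← integral_const_mul, ← parts]
  congr 1 with x
  ring

lemma exists_bound_nat_mul_abs_integral_mul_cos {g : ℝ → ℝ} (hg : ContDiff ℝ 1 g)
    (hper : g 1 = g 0) (θ : ℝ) :
    ∃ C, ∀ m : ℕ, m * |∫ x in (0 : ℝ)..1, g x * cos (2 * π * (m * x) + θ)| ≤ C := by
  obtain ⟨M, hM⟩ := (isCompact_Icc (a := (0 : ℝ)) (b := 1)).exists_bound_of_continuousOn
    (hg.continuous_deriv le_rfl).continuousOn
  refine ⟨M / (2 * π), fun m => ?_⟩
  have hsin_le : ∀ x ∈ Set.uIoc (0 : ℝ) 1, ‖deriv g x * sin (2 * π * (m * x) + θ)‖ ≤ M := by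
    intro x hx
    rw [norm_mul]
    refine (mul_le_of_le_one_right (norm_nonneg _) (abs_sin_le_one _)).trans (hM x ?_)
    simpa [Set.uIcc_of_le zero_le_one] using Set.uIoc_subset_uIcc hx
  rw [le_div_iff₀ two_pi_pos]
  calc (m : ℝ) * |∫ x in (0 : ℝ)..1, g x * cos (2 * π * (m * x) + θ)| * (2 * π)
      = |2 * π * m * ∫ x in (0 : ℝ)..1, g x * cos (2 * π * (m * x) + θ)| := by
        rw [abs_mul, abs_of_nonneg (by positivity : (0 : ℝ) ≤ 2 * π * m)]
        ring
    _ = ‖∫ x in (0 : ℝ)..1, deriv g x * sin (2 * π * (m * x) + θ)‖ := by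
        rw [two_pi_mul_integral_mul_cos_eq_neg_integral_deriv_mul_sin hg hper, abs_neg,
          norm_eq_abs]
    _ ≤ M * |1 - 0| := norm_integral_le_of_norm_le_const hsin_le
    _ = M := by norm_num

/-- For `φ(x) = cos(2πx + θ)`, the Weierstrass-type function
`W(x) = ∑ λⁿ cos(2π bⁿ x + θ)` is not real analytic. -/
theorem stmt_1 (b : ℕ) (hb : 2 ≤ b) (lam : ℝ) (hlam : 1 / b < lam ∧ lam < 1) (θ : ℝ)
    (W : ℝ → ℝ)
    (hW : ∀ x, W x = ∑' n : ℕ, lam ^ n * Real.cos (2 * Real.pi * ((b : ℝ) ^ n * x) + θ)) :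
    ¬ AnalyticOnNhd ℝ W Set.univ := by
  intro hA
  have hlam0 : 0 < lam := (by positivity : (0 : ℝ) < 1 / b).trans hlam.1
  have hblam : 1 < b * lam := (div_lt_iff₀' (by positivity)).mp hlam.1
  have hW' : W = fun x => ∑' n, lam ^ n * cos (2 * π * (((b ^ n : ℕ) : ℝ) * x) + θ) :=
    funext fun x => by simp only [hW, Nat.cast_pow]
  have hper : W 1 = W 0 := by
    simp only [hW', mul_one, mul_zero, zero_add, cos_two_pi_nat_mul_add]
  have hcoef : ∀ k : ℕ,
      ∫ x in (0 : ℝ)..1, W x * cos (2 * π * (((b ^ k : ℕ) : ℝ) * x) + θ) = lam ^ k / 2 := by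
    intro k
    rw [hW']
    refine integral_tsum_mul_cos_two_pi ?_ (Nat.pow_right_injective hb)
      (fun n => by positivity) θ k
    simpa only [abs_pow, abs_of_pos hlam0] using summable_geometric_of_lt_one hlam0.le hlam.2
  obtain ⟨C, hC⟩ := exists_bound_nat_mul_abs_integral_mul_cos hA.contDiff hper θ
  have hbound : ∀ k : ℕ, (b * lam) ^ k ≤ 2 * C := fun k => by
    have := hC (b ^ k)
    rw [hcoef, abs_of_pos (by positivity), Nat.cast_pow] at this
    rw [mul_pow]
    linarith
  obtain ⟨k, hk⟩ := ((tendsto_pow_atTop_atTop_of_one_lt hblam).eventually_gt_atTop (2 * C)).exists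
  exact (hbound k).not_gt hk
end

section
/- Let b ≥ 2 be an integer, λ ∈ (1/b,1), and φ : ℝ → ℝ a ℤ-periodic C^k function for some k ≥ 1. If W(x) = ∑_{n≥0} λ^n φ(b^n x) is Lipschitz, then W is C^k. -/
/-!
Solving `W x = φ x + λ W (b x)` for `W x` at the point `x / b` gives
`W' x = γ (W' (x / b) - φ' (x / b))` with `γ = (b λ)⁻¹ < 1`, wherever `W` is differentiable at
`x / b`. For almost every `x` this holds at all points `x / bⁿ`, and since `|W'| ≤ K` the
iteration converges: `W' x = -∑ γⁿ⁺¹ φ' (x / bⁿ⁺¹)` almost everywhere. The derivatives of order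
`< k` of this series are dominated by a geometric series, so it is `Cᵏ⁻¹`; a Lipschitz function is
the integral of its a.e. derivative, hence `W` is `Cᵏ`.
-/

open Function Set Filter Topology MeasureTheory intervalIntegral

section Periodic

variable {F : Type*} [NormedAddCommGroup F] [NormedSpace ℝ F]

theorem Function.Periodic.iteratedDeriv {f : ℝ → F} {c : ℝ} (hf : Periodic f c) (n : ℕ) :
    Periodic (iteratedDeriv n f) c := fun x => by
  have := congrFun (iteratedDeriv_comp_add_const (n := n) (f := f) (s := c)) x
  rw [hf.funext] at this
  exact this.symm

theorem Function.Periodic.exists_bound_iteratedDeriv {f : ℝ → F} {c : ℝ} (hf : Periodic f c)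
    (hc : c ≠ 0) {k : ℕ} (hfk : ContDiff ℝ k f) :
    ∃ M, ∀ j ≤ k, ∀ x, ‖_root_.iteratedDeriv j f x‖ ≤ M := by
  have hbdd : Bornology.IsBounded
      (⋃ j ∈ Finset.range (k + 1), range (_root_.iteratedDeriv j f)) :=
    (Bornology.isBounded_biUnion_finset _).2 fun j hj =>
      (hf.iteratedDeriv j).isBounded_of_continuous hc
        (hfk.continuous_iteratedDeriv j (by exact_mod_cast Finset.mem_range_succ_iff.1 hj))
  obtain ⟨M, hM⟩ := isBounded_iff_forall_norm_le.1 hbdd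
  exact ⟨M, fun j hj x =>
    hM _ (mem_biUnion (Finset.mem_range_succ_iff.2 hj) (mem_range_self x))⟩

end Periodic

theorem contDiff_tsum_mul_comp_div {ψ : ℝ → ℝ} {m : ℕ} (hψ : ContDiff ℝ m ψ) {M : ℝ}
    (hM : ∀ j ≤ m, ∀ x, ‖iteratedDeriv j ψ x‖ ≤ M) {c s : ℕ → ℝ}
    (hc : Summable fun n => ‖c n‖) (hs : ∀ n, 1 ≤ ‖s n‖) :
    ContDiff ℝ m fun x => ∑' n, c n * ψ (x / s n) := by
  refine contDiff_tsum (v := fun _ n => ‖c n‖ * M)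
    (fun n => contDiff_const.mul (hψ.comp (contDiff_id.div_const _)))
    (fun _ _ => hc.mul_right M) fun j n x hj => ?_
  have hψj : ContDiff ℝ j ψ := hψ.of_le (by exact_mod_cast hj)
  have hscale : ‖(s n)⁻¹‖ ^ j ≤ 1 :=
    pow_le_one₀ (norm_nonneg _) (by rw [norm_inv]; exact inv_le_one_of_one_le₀ (hs n))
  rw [norm_iteratedFDeriv_eq_norm_iteratedDeriv, iteratedDeriv_const_mul_field]
  simp only [div_eq_inv_mul, iteratedDeriv_comp_const_mul hψj, norm_mul, norm_pow]
  calc ‖c n‖ * (‖(s n)⁻¹‖ ^ j * ‖iteratedDeriv j ψ ((s n)⁻¹ * x)‖)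
      ≤ ‖c n‖ * (1 * M) := by
        gcongr
        exact hM j (by exact_mod_cast hj) _
    _ = ‖c n‖ * M := by rw [one_mul]

theorem tsum_pow_mul_comp_eq_add {φ : ℝ → ℝ} {M : ℝ} (hφ : ∀ x, ‖φ x‖ ≤ M) {lam : ℝ}
    (hlam : ‖lam‖ < 1) (B x : ℝ) :
    ∑' n : ℕ, lam ^ n * φ (B ^ n * x) =
      φ x + lam * ∑' n : ℕ, lam ^ n * φ (B ^ n * (B * x)) := by
  have hsum : Summable fun n : ℕ => lam ^ n * φ (B ^ n * x) := by
    refine .of_norm_bounded ((summable_geometric_of_lt_one (norm_nonneg _) hlam).mul_right M)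
      fun n => ?_
    rw [norm_mul, norm_pow]
    exact mul_le_mul_of_nonneg_left (hφ _) (by positivity)
  rw [hsum.tsum_eq_zero_add, ← tsum_mul_left]
  simp only [pow_zero, one_mul, pow_succ, mul_assoc, mul_left_comm _ B, mul_left_comm _ lam]

section ScalingEquation

variable {W φ : ℝ → ℝ} {B lam : ℝ}

theorem hasDerivAt_of_eq_add_mul_comp_mul (hfe : ∀ y, W y = φ y + lam * W (B * y))
    (hB : B ≠ 0) (hlam : lam ≠ 0) {x : ℝ} (hφ : DifferentiableAt ℝ φ (x / B))
    (hW : DifferentiableAt ℝ W (x / B)) :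
    HasDerivAt W ((B * lam)⁻¹ * (deriv W (x / B) - deriv φ (x / B))) x := by
  have hWeq : ∀ y, W y = (W (y / B) - φ (y / B)) / lam := fun y => by
    rw [hfe (y / B), mul_div_cancel₀ y hB]
    field_simp
    ring
  have hdiv : HasDerivAt (· / B) (1 / B) x := by simpa using (hasDerivAt_id x).div_const B
  have := ((hW.hasDerivAt.comp x hdiv).sub (hφ.hasDerivAt.comp x hdiv)).div_const lam
  refine (this.congr_of_eventuallyEq (.of_forall hWeq)).congr_deriv ?_
  field_simp

theorem deriv_eq_pow_mul_sub_sum (hfe : ∀ y, W y = φ y + lam * W (B * y)) (hB : B ≠ 0)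
    (hlam : lam ≠ 0) (hφ : Differentiable ℝ φ) {x : ℝ}
    (hW : ∀ n : ℕ, DifferentiableAt ℝ W (x / B ^ (n + 1))) (N : ℕ) :
    deriv W x = (B * lam)⁻¹ ^ N * deriv W (x / B ^ N)
      - ∑ i ∈ Finset.range N, (B * lam)⁻¹ ^ (i + 1) * deriv φ (x / B ^ (i + 1)) := by
  induction N with
  | zero => simp
  | succ N ih =>
    have hdiv : x / B ^ N / B = x / B ^ (N + 1) := by rw [div_div, pow_succ]
    have hstep := hasDerivAt_of_eq_add_mul_comp_mul hfe hB hlam (hφ _) (hdiv ▸ hW N)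
    rw [ih, hstep.deriv, hdiv, Finset.sum_range_succ]
    ring

theorem deriv_eq_neg_tsum (hfe : ∀ y, W y = φ y + lam * W (B * y)) (hB : B ≠ 0)
    (hlam : lam ≠ 0) (hγ : ‖(B * lam)⁻¹‖ < 1) (hφ : Differentiable ℝ φ) {M : ℝ}
    (hφ' : ∀ x, ‖deriv φ x‖ ≤ M) {K : NNReal} (hWK : LipschitzWith K W) {x : ℝ}
    (hW : ∀ n : ℕ, DifferentiableAt ℝ W (x / B ^ (n + 1))) :
    deriv W x = -∑' n : ℕ, (B * lam)⁻¹ ^ (n + 1) * deriv φ (x / B ^ (n + 1)) := by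
  set γ := (B * lam)⁻¹
  have hgeom := summable_geometric_of_lt_one (norm_nonneg _) hγ
  have hsum : Summable fun n : ℕ => γ ^ (n + 1) * deriv φ (x / B ^ (n + 1)) := by
    refine .of_norm_bounded ((hgeom.mul_left ‖γ‖).mul_right M) fun n => ?_
    rw [norm_mul, norm_pow, pow_succ']
    exact mul_le_mul_of_nonneg_left (hφ' _) (by positivity)
  have hpow : Tendsto (fun N : ℕ => γ ^ N * deriv W (x / B ^ N)) atTop (𝓝 0) := by
    have hK := (tendsto_pow_atTop_nhds_zero_of_lt_one (norm_nonneg γ) hγ).mul_const (K : ℝ)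
    rw [zero_mul] at hK
    refine squeeze_zero_norm (fun N => ?_) hK
    rw [norm_mul, norm_pow]
    exact mul_le_mul_of_nonneg_left (norm_deriv_le_of_lipschitz hWK) (by positivity)
  have hlim := hpow.sub hsum.hasSum.tendsto_sum_nat
  rw [zero_sub] at hlim
  exact tendsto_nhds_unique
    (tendsto_const_nhds.congr (deriv_eq_pow_mul_sub_sum hfe hB hlam hφ hW)) hlim

end ScalingEquation

theorem LipschitzWith.ae_forall_differentiableAt_div_pow {W : ℝ → ℝ} {K : NNReal}
    (hW : LipschitzWith K W) {B : ℝ} (hB : B ≠ 0) :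
    ∀ᵐ x, ∀ n : ℕ, DifferentiableAt ℝ W (x / B ^ n) :=
  ae_all_iff.2 fun n => by
    simpa [div_eq_inv_mul] using (Measure.quasiMeasurePreserving_smul volume
      (inv_ne_zero (pow_ne_zero n hB))).ae hW.ae_differentiableAt_real

theorem LipschitzWith.contDiff_succ_of_ae_deriv_eq {W g : ℝ → ℝ} {K : NNReal}
    (hW : LipschitzWith K W) {m : ℕ} (hg : ContDiff ℝ m g) (hd : ∀ᵐ x, deriv W x = g x) :
    ContDiff ℝ (m + 1) W := by
  have hprim : W = fun x => W 0 + ∫ t in 0..x, g t := funext fun x => by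
    rw [← integral_congr_ae (hd.mono fun t ht _ => ht),
      (hW.lipschitzOnWith (s := uIcc 0 x)).absolutelyContinuousOnInterval.integral_deriv_eq_sub]
    ring
  have hderiv : ∀ x, HasDerivAt (fun x => ∫ t in 0..x, g t) (g x) x := fun x =>
    (hg.continuous.integral_hasStrictDerivAt 0 x).hasDerivAt
  rw [hprim]
  refine contDiff_const.add (contDiff_succ_iff_deriv.2 ⟨fun x => (hderiv x).differentiableAt,
    by simp, ?_⟩)
  rwa [funext fun x => (hderiv x).deriv]

/-- If `φ` is ℤ-periodic and `Cᵏ` and `W(x) = ∑ λⁿ φ(bⁿ x)` is Lipschitz, then `W` is `Cᵏ`. -/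
theorem stmt_3 (b : ℕ) (hb : 2 ≤ b) (lam : ℝ) (hlam : 1 / b < lam ∧ lam < 1)
    (k : ℕ) (hk : 1 ≤ k) (φ : ℝ → ℝ) (hφ : ContDiff ℝ k φ) (hφp : ∀ x, φ (x + 1) = φ x)
    (W : ℝ → ℝ) (hW : ∀ x, W x = ∑' n : ℕ, lam ^ n * φ ((b : ℝ) ^ n * x))
    (K : NNReal) (hLip : LipschitzWith K W) :
    ContDiff ℝ k W := by
  obtain ⟨m, rfl⟩ : ∃ m, k = m + 1 := ⟨k - 1, by omega⟩
  have hb1 : (1 : ℝ) ≤ ‖(b : ℝ)‖ := by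
    rw [Real.norm_natCast, Nat.one_le_cast]
    omega
  have hb0 : (b : ℝ) ≠ 0 := by positivity
  have hlam0 : 0 < lam := lt_of_le_of_lt (by positivity) hlam.1
  have hγ : ‖((b : ℝ) * lam)⁻¹‖ < 1 := by
    rw [norm_inv, Real.norm_of_nonneg (by positivity)]
    exact inv_lt_one_of_one_lt₀ ((div_lt_iff₀' (by positivity)).1 hlam.1)
  have hper : Periodic φ 1 := hφp
  have hφ' : ContDiff ℝ m (deriv φ) := (contDiff_succ_iff_deriv.1 (by exact_mod_cast hφ)).2.2
  have hper' : Periodic (deriv φ) 1 := by simpa using hper.iteratedDeriv 1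
  obtain ⟨M, hM⟩ := hper'.exists_bound_iteratedDeriv one_ne_zero hφ'
  obtain ⟨M₀, hM₀⟩ := isBounded_iff_forall_norm_le.1
    (hper.isBounded_of_continuous one_ne_zero hφ.continuous)
  have hfe : ∀ x, W x = φ x + lam * W (b * x) := fun x => by
    rw [hW, hW, tsum_pow_mul_comp_eq_add (fun x => hM₀ _ (mem_range_self x))
      (by rw [Real.norm_of_nonneg hlam0.le]; exact hlam.2)]
  have hY : ContDiff ℝ m fun x =>
      -∑' n : ℕ, ((b : ℝ) * lam)⁻¹ ^ (n + 1) * deriv φ (x / b ^ (n + 1)) := by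
    have hc := (summable_nat_add_iff 1).2 (summable_geometric_of_lt_one (norm_nonneg _) hγ)
    exact (contDiff_tsum_mul_comp_div hφ' hM (by simpa only [norm_pow] using hc)
      fun n => by rw [norm_pow]; exact one_le_pow₀ hb1).neg
  refine (hLip.contDiff_succ_of_ae_deriv_eq hY ?_).of_le (by simp)
  filter_upwards [hLip.ae_forall_differentiableAt_div_pow hb0] with x hx
  exact deriv_eq_neg_tsum hfe hb0 hlam0.ne' hγ (hφ.differentiable (by simp))
    (fun x => by simpa using hM 0 m.zero_le x) hLip fun n => hx (n + 1)
end

section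
/- Let W : ℝ → ℝ be α-Hölder continuous with constant K (for some α ∈ (0,1)) and suppose there exist constants c > 0, κ > 0 such that for every δ ∈ (0,1) and every x ∈ ℝ there exists y with cδ < y − x < δ and |W(y) − W(x)| ≥ κ(y−x)^α. Then there exist t₀ > 0 and C₀ > 0 such that: whenever t ≠ 0 and the function f(x) = W(x+t) − W(x) is C² with sup_x |f''(x)| = E < ∞, either |t| > t₀ or E·|t|^{2−α} ≥ C₀. -/
/-!
Write `f = W (· + t) - W` and `h = |t|`. Hölder continuity gives `|f| ≤ K h ^ α`, so with
`|f''| ≤ E` a Landau-type inequality makes `f` Lipschitz with constant `M ≤ 2 K h ^ α / u + E u`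
for every window `u > 0`.

Telescoping along `x, x + t, …, x + n t` gives `W (x + n t) - W x = n f x + O(M n² h)`; comparing
with the Hölder bound for `Λ n` steps shows that `n |f x|` is at most `K Λ ^ (α - 1) (n h) ^ α`
up to a Lipschitz error, which is small for large `Λ`. So every increment of `W` over a length
`q < A h` is at most `(κ c ^ α / 2) (A h) ^ α + O(M A² h)`, while the anti-Hölder hypothesis at
scale `δ = A h` yields an increment of at least `κ c ^ α (A h) ^ α`. Hence `M ≳ h ^ (α - 1)`,
and the choice `u ≍ h` turns this into `E h ^ (2 - α) ≳ 1`.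
-/

open Set Filter Topology

lemma nonneg_of_abs_sub_le_mul {g : ℝ → ℝ} {M : ℝ} (hM : ∀ x y, |g y - g x| ≤ M * |y - x|) :
    0 ≤ M := by
  simpa using (abs_nonneg _).trans (hM 0 1)

lemma abs_sub_le_of_abs_deriv_le {g : ℝ → ℝ} (hg : Differentiable ℝ g) {M : ℝ}
    (hM : ∀ x, |deriv g x| ≤ M) (x y : ℝ) : |g y - g x| ≤ M * |y - x| := by
  simpa only [Real.norm_eq_abs] using convex_univ.norm_image_sub_le_of_norm_deriv_le
    (fun z _ => hg z) (fun z _ => hM z) (mem_univ x) (mem_univ y)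

/-- Compare `g' y` with the slope of `g` on `[y, y + u]`. -/
lemma abs_deriv_le_of_abs_le {g : ℝ → ℝ} (hg : Differentiable ℝ g) {B E u : ℝ} (hu : 0 < u)
    (hB : ∀ x, |g x| ≤ B) (hE : ∀ x y, |deriv g y - deriv g x| ≤ E * |y - x|) (y : ℝ) :
    |deriv g y| ≤ 2 * B / u + E * u := by
  obtain ⟨ξ, ⟨hyξ, hξu⟩, hslope⟩ := exists_deriv_eq_slope g (lt_add_of_pos_right y hu)
    hg.continuous.continuousOn (fun z _ => hg.differentiableAt.differentiableWithinAt)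
  have hE0 : 0 ≤ E := nonneg_of_abs_sub_le_mul hE
  have hslope_le : |deriv g ξ| ≤ 2 * B / u := by
    rw [hslope, add_sub_cancel_left, abs_div, abs_of_pos hu]
    gcongr
    linarith [abs_sub (g (y + u)) (g y), hB (y + u), hB y]
  have hdist : |deriv g y - deriv g ξ| ≤ E * u :=
    (hE ξ y).trans (mul_le_mul_of_nonneg_left
      (by rw [abs_sub_comm, abs_of_pos (sub_pos.2 hyξ)]; linarith) hE0)
  linarith [abs_sub_abs_le_abs_sub (deriv g y) (deriv g ξ)]

lemma abs_sub_le_of_abs_le_of_abs_iteratedDeriv_two_le {g : ℝ → ℝ} (hg : ContDiff ℝ 2 g)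
    {B E u : ℝ} (hu : 0 < u) (hB : ∀ x, |g x| ≤ B) (hE : ∀ x, |iteratedDeriv 2 g x| ≤ E)
    (x y : ℝ) : |g y - g x| ≤ (2 * B / u + E * u) * |y - x| := by
  have hg' : Differentiable ℝ (deriv g) :=
    ((contDiff_succ_iff_deriv (n := 1)).mp hg).2.2.differentiable one_ne_zero
  have hE' : ∀ x, |deriv (deriv g) x| ≤ E := by
    simpa only [iteratedDeriv_succ, iteratedDeriv_zero] using hE
  exact abs_sub_le_of_abs_deriv_le (hg.differentiable two_ne_zero)
    (abs_deriv_le_of_abs_le (hg.differentiable two_ne_zero) hu hB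
      (abs_sub_le_of_abs_deriv_le hg' hE')) x y

lemma sq_div_le_mul_rpow_of_le {K G h α E : ℝ} (hK : 0 < K) (hG : 0 < G) (hh : 0 < h)
    (hle : G * h ^ α ≤ (2 * (K * h ^ α) / (4 * K * h / G) + E * (4 * K * h / G)) * h) :
    G ^ 2 / (8 * K) ≤ E * h ^ (2 - α) := by
  have hpow : h ^ (2 : ℝ) = h ^ α * h ^ (2 - α) := by
    rw [← Real.rpow_add hh]; ring_nf
  have hhalf : G / 2 ≤ 4 * K / G * (E * h ^ (2 - α)) := by
    refine le_of_mul_le_mul_right ?_ (by positivity : 0 < h ^ α)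
    have : (2 * (K * h ^ α) / (4 * K * h / G) + E * (4 * K * h / G)) * h
        = G / 2 * h ^ α + 4 * K / G * (E * (h ^ α * h ^ (2 - α))) := by
      rw [← hpow, Real.rpow_two]
      field_simp
      ring
    linarith
  rw [div_le_iff₀ (by positivity)]
  calc G ^ 2 = 2 * G * (G / 2) := by ring
    _ ≤ 2 * G * (4 * K / G * (E * h ^ (2 - α))) := by gcongr
    _ = E * h ^ (2 - α) * (8 * K) := by field_simp; ring

section Increments

variable {W : ℝ → ℝ}

lemma abs_add_nat_mul_sub_sub_le {t M : ℝ}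
    (hM : ∀ x y, |(W (y + t) - W y) - (W (x + t) - W x)| ≤ M * |y - x|) (x : ℝ) (n : ℕ) :
    |W (x + n * t) - W x - n * (W (x + t) - W x)| ≤ M * n ^ 2 * |t| := by
  have hM0 : 0 ≤ M := nonneg_of_abs_sub_le_mul hM
  have htel : W (x + n * t) - W x - n * (W (x + t) - W x)
      = ∑ j ∈ Finset.range n, ((W (x + j * t + t) - W (x + j * t)) - (W (x + t) - W x)) := by
    rw [Finset.sum_sub_distrib, Finset.sum_const, Finset.card_range, nsmul_eq_mul]
    have := Finset.sum_range_sub (fun j : ℕ => W (x + j * t)) n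
    push_cast [add_mul, one_mul, ← add_assoc] at this
    simp only [zero_mul, add_zero] at this
    rw [this]
  rw [htel]
  calc _ ≤ ∑ j ∈ Finset.range n, M * (n * |t|) := by
        refine (Finset.abs_sum_le_sum_abs _ _).trans (Finset.sum_le_sum fun j hj => ?_)
        refine (hM x (x + j * t)).trans (mul_le_mul_of_nonneg_left ?_ hM0)
        rw [add_sub_cancel_left, abs_mul, Nat.abs_cast]
        gcongr
        exact_mod_cast (Finset.mem_range.1 hj).le
    _ = M * n ^ 2 * |t| := by simp only [Finset.sum_const, Finset.card_range, nsmul_eq_mul]; ring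

lemma nat_mul_abs_sub_le {t M K α : ℝ} (hHolder : ∀ x y, |W x - W y| ≤ K * |x - y| ^ α)
    (hM : ∀ x y, |(W (y + t) - W y) - (W (x + t) - W x)| ≤ M * |y - x|) (x : ℝ) (m : ℕ) :
    m * |W (x + t) - W x| ≤ K * (m * |t|) ^ α + M * m ^ 2 * |t| := by
  have hH : |W (x + m * t) - W x| ≤ K * (m * |t|) ^ α := by
    simpa only [add_sub_cancel_left, abs_mul, Nat.abs_cast] using hHolder (x + m * t) x
  calc (m : ℝ) * |W (x + t) - W x|
      = |(W (x + m * t) - W x) - (W (x + m * t) - W x - m * (W (x + t) - W x))| := by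
        rw [sub_sub_cancel, abs_mul, Nat.abs_cast]
    _ ≤ |W (x + m * t) - W x| + |W (x + m * t) - W x - m * (W (x + t) - W x)| := abs_sub _ _
    _ ≤ K * (m * |t|) ^ α + M * m ^ 2 * |t| := add_le_add hH (abs_add_nat_mul_sub_sub_le hM x m)

/-- Apply `nat_mul_abs_sub_le` with `Λ * n` steps: the Hölder term shrinks by `Λ ^ (α - 1)`. -/
lemma abs_add_nat_mul_sub_le {t M K α : ℝ} (hHolder : ∀ x y, |W x - W y| ≤ K * |x - y| ^ α)
    (hM : ∀ x y, |(W (y + t) - W y) - (W (x + t) - W x)| ≤ M * |y - x|) {Λ : ℕ} (hΛ : 0 < Λ)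
    (x : ℝ) (n : ℕ) :
    |W (x + n * t) - W x| ≤ K * (Λ : ℝ) ^ (α - 1) * (n * |t|) ^ α + M * (Λ + 1) * n ^ 2 * |t| := by
  have hΛ' : (0 : ℝ) < Λ := Nat.cast_pos.2 hΛ
  have hmul := nat_mul_abs_sub_le hHolder hM x (Λ * n)
  rw [Nat.cast_mul, mul_assoc (Λ : ℝ) n |t|, Real.mul_rpow hΛ'.le (by positivity)] at hmul
  have hsplit : |W (x + n * t) - W x| ≤ n * |W (x + t) - W x| + M * n ^ 2 * |t| := by
    calc |W (x + n * t) - W x|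
        = |n * (W (x + t) - W x) + (W (x + n * t) - W x - n * (W (x + t) - W x))| := by
          rw [add_sub_cancel]
      _ ≤ |n * (W (x + t) - W x)| + |W (x + n * t) - W x - n * (W (x + t) - W x)| :=
          abs_add_le _ _
      _ ≤ n * |W (x + t) - W x| + M * n ^ 2 * |t| := by
          rw [abs_mul, Nat.abs_cast]
          exact add_le_add le_rfl (abs_add_nat_mul_sub_sub_le hM x n)
  refine le_of_mul_le_mul_left ?_ hΛ'
  calc (Λ : ℝ) * |W (x + n * t) - W x|
      ≤ Λ * (n * |W (x + t) - W x|) + Λ * (M * n ^ 2 * |t|) := by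
        rw [← mul_add]; exact mul_le_mul_of_nonneg_left hsplit hΛ'.le
    _ ≤ K * (Λ ^ α * (n * |t|) ^ α) + M * (Λ * n) ^ 2 * |t| + Λ * (M * n ^ 2 * |t|) := by
        rw [← mul_assoc]; gcongr
    _ = Λ * (K * Λ ^ (α - 1) * (n * |t|) ^ α + M * (Λ + 1) * n ^ 2 * |t|) := by
        rw [Real.rpow_sub_one hΛ'.ne']
        field_simp
        ring

/-- Walk from `x` towards `x + q` in `⌊q / |t|⌋` steps of length `|t|`. -/
lemma abs_add_sub_le_of_nonneg {t M K α : ℝ} (hα : 0 < α)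
    (hHolder : ∀ x y, |W x - W y| ≤ K * |x - y| ^ α)
    (hM : ∀ x y, |(W (y + t) - W y) - (W (x + t) - W x)| ≤ M * |y - x|) (ht : t ≠ 0)
    {Λ : ℕ} (hΛ : 0 < Λ) (x : ℝ) {q : ℝ} (hq : 0 ≤ q) :
    |W (x + q) - W x| ≤
      K * |t| ^ α + K * (Λ : ℝ) ^ (α - 1) * q ^ α + M * (Λ + 1) * q ^ 2 / |t| := by
  set h := |t| with hh_def
  have hh : 0 < h := abs_pos.2 ht
  have hK : 0 ≤ K := by simpa using (abs_nonneg _).trans (hHolder 1 0)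
  have hM0 : 0 ≤ M := nonneg_of_abs_sub_le_mul hM
  set n := ⌊q / h⌋₊
  have hnq : n * h ≤ q := (le_div_iff₀ hh).1 (Nat.floor_le (div_nonneg hq hh.le))
  have hqn : q < n * h + h := by
    have := (div_lt_iff₀ hh).1 (Nat.lt_floor_add_one (q / h)); linarith
  have hgrid : |W (x + n * h) - W x| ≤
      K * Λ ^ (α - 1) * (n * h) ^ α + M * (Λ + 1) * n ^ 2 * h := by
    rcases ht.lt_or_gt with ht | ht
    · have := abs_add_nat_mul_sub_le hHolder hM hΛ (x + n * h) n
      rwa [show x + n * h + n * t = x by rw [hh_def, abs_of_neg ht]; ring, abs_sub_comm] at this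
    · have := abs_add_nat_mul_sub_le hHolder hM hΛ x n
      rwa [show (n : ℝ) * t = n * h by rw [hh_def, abs_of_pos ht]] at this
  have hrem : |W (x + q) - W (x + n * h)| ≤ K * h ^ α :=
    (hHolder _ _).trans (by gcongr; rw [abs_of_nonneg (by linarith)]; linarith)
  have hpow : (n * h) ^ α ≤ q ^ α := by gcongr
  have hsq : (n : ℝ) ^ 2 * h ≤ q ^ 2 / h := by
    rw [le_div_iff₀ hh]; nlinarith [mul_le_mul hnq hnq (by positivity) hq]
  calc |W (x + q) - W x| ≤ |W (x + q) - W (x + n * h)| + |W (x + n * h) - W x| :=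
        abs_sub_le _ _ _
    _ ≤ K * h ^ α + (K * Λ ^ (α - 1) * q ^ α + M * (Λ + 1) * (q ^ 2 / h)) := by
        refine add_le_add hrem (hgrid.trans ?_)
        rw [mul_assoc (M * (Λ + 1))]
        gcongr
    _ = _ := by ring

theorem exists_mul_rpow_le_of_antiHolder {α K c κ : ℝ} (hα : α ∈ Ioo (0 : ℝ) 1)
    (hK : 0 < K) (hc : 0 < c) (hκ : 0 < κ)
    (hHolder : ∀ x y : ℝ, |W x - W y| ≤ K * |x - y| ^ α)
    (hAnti : ∀ δ ∈ Ioo (0 : ℝ) 1, ∀ x : ℝ, ∃ y : ℝ,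
      c * δ < y - x ∧ y - x < δ ∧ κ * (y - x) ^ α ≤ |W y - W x|) :
    ∃ t₀ > (0 : ℝ), ∃ G > (0 : ℝ), ∀ t : ℝ, t ≠ 0 → |t| ≤ t₀ → ∀ M : ℝ,
      (∀ x y, |(W (y + t) - W y) - (W (x + t) - W x)| ≤ M * |y - x|) → G * |t| ^ α ≤ M * |t| := by
  obtain ⟨hα0, hα1⟩ := hα
  set ε := κ * c ^ α / 4
  have hε : 0 < ε := by positivity
  obtain ⟨Λ, hΛε, hΛ⟩ : ∃ Λ : ℕ, K * (Λ : ℝ) ^ (α - 1) ≤ ε ∧ 0 < Λ := by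
    have hlim : Tendsto (fun m : ℕ => K * (m : ℝ) ^ (α - 1)) atTop (𝓝 0) := by
      have := ((tendsto_rpow_neg_atTop (sub_pos.2 hα1)).comp
        tendsto_natCast_atTop_atTop).const_mul K
      simpa only [Function.comp_def, neg_sub, mul_zero] using this
    exact ((hlim.eventually (ge_mem_nhds hε)).and (eventually_gt_atTop 0)).exists
  set A := (K / ε) ^ α⁻¹ with hA_def
  have hA : 0 < A := by positivity
  have hεA : ε * A ^ α = K := by
    rw [hA_def, Real.rpow_inv_rpow (by positivity) hα0.ne']; field_simp
  refine ⟨1 / (2 * A), by positivity, 2 * K / ((Λ + 1) * A ^ 2), by positivity,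
    fun t ht htt₀ M hM => ?_⟩
  have hh : 0 < |t| := abs_pos.2 ht
  have hAh : A * |t| < 1 := by
    calc A * |t| ≤ A * (1 / (2 * A)) := by gcongr
      _ < 1 := by field_simp; norm_num
  obtain ⟨q, hcq, hqA, hq⟩ := hAnti (A * |t|) ⟨mul_pos hA hh, hAh⟩ 0
  simp only [sub_zero] at hcq hqA hq
  have hq0 : 0 < q := hcq.trans' (by positivity)
  have hupper := abs_add_sub_le_of_nonneg hα0 hHolder hM ht hΛ 0 hq0.le
  simp only [zero_add] at hupper
  have hlower : 4 * ε * (A * |t|) ^ α ≤ |W q - W 0| := by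
    calc 4 * ε * (A * |t|) ^ α = κ * (c * (A * |t|)) ^ α := by
          rw [Real.mul_rpow hc.le (by positivity)]; ring
      _ ≤ κ * q ^ α := by gcongr
      _ ≤ |W q - W 0| := hq
  have hKh : K * |t| ^ α = ε * (A * |t|) ^ α := by
    rw [Real.mul_rpow hA.le hh.le, ← hεA]; ring
  have hΛterm : K * Λ ^ (α - 1) * q ^ α ≤ ε * (A * |t|) ^ α := by
    gcongr
  have hMterm : M * (Λ + 1) * q ^ 2 / |t| ≤ M * (Λ + 1) * A ^ 2 * |t| := by
    have hM0 : 0 ≤ M := nonneg_of_abs_sub_le_mul hM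
    rw [div_le_iff₀ hh]
    calc M * (Λ + 1) * q ^ 2 ≤ M * (Λ + 1) * (A * |t|) ^ 2 := by gcongr
      _ = _ := by ring
  rw [div_mul_eq_mul_div, div_le_iff₀ (by positivity)]
  linarith

end Increments

/-- Key Estimate: lower bound for the size of a C²-regulating period of an
α-Hölder, anti-Hölder function `W`. -/
theorem stmt_4 (W : ℝ → ℝ) (α K c κ : ℝ) (hα : α ∈ Set.Ioo (0:ℝ) 1)
    (hK : 0 < K) (hc : 0 < c) (hκ : 0 < κ)
    (hHolder : ∀ x y : ℝ, |W x - W y| ≤ K * |x - y| ^ α)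
    (hAnti : ∀ δ ∈ Set.Ioo (0:ℝ) 1, ∀ x : ℝ, ∃ y : ℝ,
      c * δ < y - x ∧ y - x < δ ∧ κ * (y - x) ^ α ≤ |W y - W x|) :
    ∃ t₀ > (0:ℝ), ∃ C₀ > (0:ℝ), ∀ t : ℝ, t ≠ 0 → ∀ E : ℝ,
      ContDiff ℝ 2 (fun x => W (x + t) - W x) →
      (∀ x, |iteratedDeriv 2 (fun x => W (x + t) - W x) x| ≤ E) →
      t₀ < |t| ∨ C₀ ≤ E * |t| ^ (2 - α) := by
  obtain ⟨t₀, ht₀, G, hG, hLipschitz_ge⟩ :=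
    exists_mul_rpow_le_of_antiHolder hα hK hc hκ hHolder hAnti
  refine ⟨t₀, ht₀, G ^ 2 / (8 * K), by positivity, fun t ht E hf hE => ?_⟩
  refine (lt_or_ge t₀ |t|).imp id fun htt₀ => ?_
  have hbound : ∀ x, |W (x + t) - W x| ≤ K * |t| ^ α := fun x => by
    simpa only [add_sub_cancel_left] using hHolder (x + t) x
  -- the window `u` balances the two terms of the Landau-type bound
  have hG_le := hLipschitz_ge t ht htt₀ _
    (abs_sub_le_of_abs_le_of_abs_iteratedDeriv_two_le hf (u := 4 * K * |t| / G) (by positivity)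
      hbound hE)
  exact sq_div_le_mul_rpow_of_le hK hG (abs_pos.2 ht) hG_le
end

section
/- Call a C^k function f : [a,b) → ℝ k-regular if sup_{x∈[a,b)} |f^{(k)}(x)| ≤ 2·inf_{x∈[a,b)} |f^{(k)}(x)|. For every integer k ≥ 1 there exist δ_k > 0 and ρ_k > 0 such that: if f : [a,b) → ℝ is k-regular for some k ≥ 1, then there exists an interval J ⊆ [a,b) with |J| > δ_k(b−a) and inf_{x∈J} |f'(x)| ≥ ρ_k · sup_{x∈[a,b)} |f'(x)|. -/
/-!
Induct on `k`. If `f` is `k'`-regular for some `1 ≤ k' < k`, the claim for `k'` gives it for `k`.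
Otherwise `c/2 ≤ |f⁽ᵏ⁾| ≤ 2c` on `[a,b)` for some `c`. A function that is not regular is at most
twice its oscillation, so by the mean value theorem `sup |f⁽ʲ⁾| ≤ 2 (b-a) sup |f⁽ʲ⁺¹⁾|` for
`1 ≤ j < k`, whence `sup |f'| ≤ 2c (2(b-a))^(k-1)`. Conversely, if `|φ'| ≥ μ` on an interval then
`φ'` has constant sign (Darboux), so `φ` is monotone with slope at least `μ` and `|φ| ≥ μ·len/4` on
one of the two outer quarters. Descending from `f⁽ᵏ⁾` to `f'` in `k-1` such steps yields a
subinterval of length `(b-a)/4^(k-1)` on which `|f'| ≥ (c/2) ((b-a)/4^(k-1))^(k-1)`.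
-/

open Set

/-- `f` is `k`-regular on `s` in the sense of the paper iff
`IsRegularOn (iteratedDerivWithin k f s) s`. -/
def IsRegularOn (g : ℝ → ℝ) (s : Set ℝ) : Prop :=
  ∀ x ∈ s, ∀ y ∈ s, |g x| ≤ 2 * |g y|

section Descent

variable {φ ψ : ℝ → ℝ} {u v μ : ℝ}

theorem mul_sub_le_sub_of_le_hasDerivWithinAt_Ico
    (hφ : ∀ x ∈ Ico u v, HasDerivWithinAt φ (ψ x) (Ico u v) x) (hψ : ∀ x ∈ Ico u v, μ ≤ ψ x) :
    ∀ x ∈ Ico u v, ∀ y ∈ Ico u v, x ≤ y → μ * (y - x) ≤ φ y - φ x := by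
  have hderiv : ∀ x ∈ Ioo u v, HasDerivAt φ (ψ x) x := fun x hx =>
    (hφ x (Ioo_subset_Ico_self hx)).hasDerivAt (Ico_mem_nhds hx.1 hx.2)
  refine (convex_Ico u v).mul_sub_le_image_sub_of_le_deriv
    (fun x hx => (hφ x hx).continuousWithinAt) ?_ ?_ <;> rw [interior_Ico]
  · exact fun x hx => (hderiv x hx).differentiableAt.differentiableWithinAt
  · exact fun x hx => (hderiv x hx).deriv ▸ hψ x (Ioo_subset_Ico_self hx)

theorem exists_Ico_quarter_le_abs_of_le_hasDerivWithinAt (huv : u < v) (hμ : 0 ≤ μ)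
    (hφ : ∀ x ∈ Ico u v, HasDerivWithinAt φ (ψ x) (Ico u v) x) (hψ : ∀ x ∈ Ico u v, μ ≤ ψ x) :
    ∃ u' v', Ico u' v' ⊆ Ico u v ∧ v' - u' = (v - u) / 4 ∧
      ∀ x ∈ Ico u' v', μ * ((v - u) / 4) ≤ |φ x| := by
  have hgrow := mul_sub_le_sub_of_le_hasDerivWithinAt_Ico hφ hψ
  have hm : (u + v) / 2 ∈ Ico u v := ⟨by linarith, by linarith⟩
  rcases le_or_gt 0 (φ ((u + v) / 2)) with hpos | hneg
  · refine ⟨u + 3 * (v - u) / 4, v, Ico_subset_Ico_left (by linarith), by ring,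
      fun x ⟨hx₁, hx₂⟩ => ?_⟩
    have := hgrow _ hm x ⟨by linarith, hx₂⟩ (by linarith)
    have : μ * ((v - u) / 4) ≤ μ * (x - (u + v) / 2) :=
      mul_le_mul_of_nonneg_left (by linarith) hμ
    exact (by linarith : μ * ((v - u) / 4) ≤ φ x).trans (le_abs_self _)
  · refine ⟨u, u + (v - u) / 4, Ico_subset_Ico_right (by linarith), by ring,
      fun x ⟨hx₁, hx₂⟩ => ?_⟩
    have := hgrow x ⟨hx₁, by linarith⟩ _ hm (by linarith)
    have : μ * ((v - u) / 4) ≤ μ * ((u + v) / 2 - x) :=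
      mul_le_mul_of_nonneg_left (by linarith) hμ
    exact (by linarith : μ * ((v - u) / 4) ≤ -φ x).trans (neg_le_abs _)

theorem exists_Ico_quarter_le_abs_of_le_abs_hasDerivWithinAt (huv : u < v)
    (hφ : ∀ x ∈ Ico u v, HasDerivWithinAt φ (ψ x) (Ico u v) x) (hψ : ∀ x ∈ Ico u v, μ ≤ |ψ x|) :
    ∃ u' v', Ico u' v' ⊆ Ico u v ∧ v' - u' = (v - u) / 4 ∧
      ∀ x ∈ Ico u' v', μ * ((v - u) / 4) ≤ |φ x| := by
  rcases le_or_gt μ 0 with hμ | hμ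
  · exact ⟨u, u + (v - u) / 4, Ico_subset_Ico_right (by linarith), by ring,
      fun x _ => (mul_nonpos_of_nonpos_of_nonneg hμ (by linarith)).trans (abs_nonneg _)⟩
  have hne : ∀ x ∈ Ico u v, ψ x ≠ 0 := fun x hx h0 => by
    have := hψ x hx
    rw [h0, abs_zero] at this
    linarith
  rcases hasDerivWithinAt_forall_lt_or_forall_gt_of_forall_ne (convex_Ico u v) hφ hne
    with hneg | hpos
  · obtain ⟨u', v', hsub, hlen, hbound⟩ := exists_Ico_quarter_le_abs_of_le_hasDerivWithinAt
      huv hμ.le (fun x hx => (hφ x hx).neg) fun x hx => abs_of_neg (hneg x hx) ▸ hψ x hx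
    exact ⟨u', v', hsub, hlen, fun x hx => by simpa only [Pi.neg_apply, abs_neg] using hbound x hx⟩
  · exact exists_Ico_quarter_le_abs_of_le_hasDerivWithinAt huv hμ.le hφ
      fun x hx => abs_of_pos (hpos x hx) ▸ hψ x hx

end Descent

section DerivativeChain

variable {g : ℕ → ℝ → ℝ} {a b : ℝ}

theorem exists_Ico_le_abs_of_hasDerivWithinAt_chain {μ : ℝ} (n : ℕ) (hab : a < b) (hμ : 0 ≤ μ)
    (hg : ∀ j < n, ∀ x ∈ Ico a b, HasDerivWithinAt (g j) (g (j + 1) x) (Ico a b) x)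
    (hn : ∀ x ∈ Ico a b, μ ≤ |g n x|) :
    ∃ u v, Ico u v ⊆ Ico a b ∧ v - u = (b - a) / 4 ^ n ∧
      ∀ x ∈ Ico u v, μ * ((b - a) / 4 ^ n) ^ n ≤ |g 0 x| := by
  induction n generalizing g with
  | zero => exact ⟨a, b, subset_rfl, by simp, by simpa using hn⟩
  | succ n ih =>
    obtain ⟨u₁, v₁, hsub₁, hlen₁, hbound₁⟩ :=
      ih (g := fun j => g (j + 1)) (fun j hj => hg (j + 1) (by omega)) hn
    set L := (b - a) / 4 ^ n
    have hL : 0 < L := by have := sub_pos.2 hab; positivity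
    obtain ⟨u₂, v₂, hsub₂, hlen₂, hbound₂⟩ :=
      exists_Ico_quarter_le_abs_of_le_abs_hasDerivWithinAt (by linarith)
        (fun x hx => (hg 0 n.succ_pos x (hsub₁ hx)).mono hsub₁) hbound₁
    refine ⟨u₂, v₂, hsub₂.trans hsub₁, by rw [hlen₂, hlen₁, pow_succ, div_div],
      fun x hx => le_trans ?_ (hbound₂ x hx)⟩
    calc μ * ((b - a) / 4 ^ (n + 1)) ^ (n + 1) = μ * (L / 4) ^ n * (L / 4) := by
          rw [pow_succ 4, ← div_div, pow_succ]; ring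
      _ ≤ μ * L ^ n * ((v₁ - u₁) / 4) := by rw [hlen₁]; gcongr; linarith

theorem abs_le_of_not_isRegularOn {g g' : ℝ → ℝ} {M : ℝ}
    (hg : ∀ x ∈ Ico a b, HasDerivWithinAt g (g' x) (Ico a b) x)
    (hg' : ∀ x ∈ Ico a b, |g' x| ≤ M) (hirreg : ¬IsRegularOn g (Ico a b)) :
    ∀ x ∈ Ico a b, |g x| ≤ 2 * (M * (b - a)) := by
  simp only [IsRegularOn, not_forall, not_le] at hirreg
  obtain ⟨x₀, hx₀, y₀, hy₀, hlt⟩ := hirreg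
  have hM : 0 ≤ M := (abs_nonneg _).trans (hg' x₀ hx₀)
  have hosc : ∀ x ∈ Ico a b, ∀ y ∈ Ico a b, |g x - g y| ≤ M * (b - a) := fun x hx y hy =>
    calc |g x - g y| ≤ M * |x - y| :=
          (convex_Ico a b).norm_image_sub_le_of_norm_hasDerivWithin_le hg hg' hy hx
      _ ≤ M * (b - a) := mul_le_mul_of_nonneg_left
          (abs_sub_le_iff.2 ⟨by linarith [hx.2, hy.1], by linarith [hx.1, hy.2]⟩) hM
  intro x hx
  linarith [hosc x₀ hx₀ y₀ hy₀, hosc x hx y₀ hy₀, abs_sub_abs_le_abs_sub (g x₀) (g y₀),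
    abs_sub_abs_le_abs_sub (g x) (g y₀)]

theorem abs_le_of_not_isRegularOn_chain {M : ℝ} (n : ℕ)
    (hg : ∀ j < n, ∀ x ∈ Ico a b, HasDerivWithinAt (g j) (g (j + 1) x) (Ico a b) x)
    (hirreg : ∀ j < n, ¬IsRegularOn (g j) (Ico a b)) (hn : ∀ x ∈ Ico a b, |g n x| ≤ M) :
    ∀ x ∈ Ico a b, |g 0 x| ≤ M * (2 * (b - a)) ^ n := by
  induction n generalizing g with
  | zero => simpa using hn
  | succ n ih =>
    intro x hx
    have hbound := ih (g := fun j => g (j + 1)) (fun j hj => hg (j + 1) (by omega))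
      (fun j hj => hirreg (j + 1) (by omega)) hn
    calc |g 0 x| ≤ 2 * (M * (2 * (b - a)) ^ n * (b - a)) :=
          abs_le_of_not_isRegularOn (hg 0 n.succ_pos) hbound (hirreg 0 n.succ_pos) x hx
      _ = M * (2 * (b - a)) ^ (n + 1) := by ring

theorem exists_Ico_abs_le_mul_abs_of_chain (n : ℕ) (hab : a < b)
    (hg : ∀ j < n, ∀ x ∈ Ico a b, HasDerivWithinAt (g j) (g (j + 1) x) (Ico a b) x)
    (hirreg : ∀ j < n, ¬IsRegularOn (g j) (Ico a b)) (hreg : IsRegularOn (g n) (Ico a b)) :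
    ∃ u v, Ico u v ⊆ Ico a b ∧ v - u = (b - a) / 4 ^ n ∧
      ∀ x ∈ Ico u v, ∀ y ∈ Ico a b, |g 0 y| ≤ 4 ^ (n + 1) ^ 2 * |g 0 x| := by
  have ha : a ∈ Ico a b := left_mem_Ico.2 hab
  set c := |g n a|
  obtain ⟨u, v, hsub, hlen, hlower⟩ := exists_Ico_le_abs_of_hasDerivWithinAt_chain n hab
    (by positivity : 0 ≤ c / 2) hg fun x hx => by linarith [hreg a ha x hx]
  refine ⟨u, v, hsub, hlen, fun x hx y hy => ?_⟩
  have hupper := abs_le_of_not_isRegularOn_chain n hg hirreg (fun x hx => hreg x hx a ha) y hy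
  have hconst : (2 : ℝ) ^ (n + 2) * 4 ^ n ^ 2 ≤ 4 ^ (n + 1) ^ 2 := by
    have : (2 : ℝ) ^ (n + 2) ≤ 4 ^ (2 * n + 1) := by
      rw [show (4 : ℝ) = 2 ^ 2 by norm_num, ← pow_mul]
      exact pow_le_pow_right₀ one_le_two (by omega)
    calc (2 : ℝ) ^ (n + 2) * 4 ^ n ^ 2 ≤ 4 ^ (2 * n + 1) * 4 ^ n ^ 2 := by gcongr
      _ = 4 ^ (n + 1) ^ 2 := by rw [← pow_add]; ring_nf
  calc |g 0 y| ≤ 2 * c * (2 * (b - a)) ^ n := hupper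
    _ = 2 ^ (n + 2) * 4 ^ n ^ 2 * (c / 2 * ((b - a) / 4 ^ n) ^ n) := by
      rw [div_pow, ← pow_mul, ← sq, mul_pow]
      field_simp
      ring
    _ ≤ 4 ^ (n + 1) ^ 2 * (c / 2 * ((b - a) / 4 ^ n) ^ n) := by
      have := sub_pos.2 hab
      gcongr
    _ ≤ 4 ^ (n + 1) ^ 2 * |g 0 x| := by gcongr; exact hlower x hx

end DerivativeChain

theorem ContDiffOn.hasDerivWithinAt_iteratedDerivWithin {f : ℝ → ℝ} {s : Set ℝ} {n m : ℕ}
    (hf : ContDiffOn ℝ n f s) (hs : UniqueDiffOn ℝ s) (hm : m < n) {x : ℝ} (hx : x ∈ s) :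
    HasDerivWithinAt (iteratedDerivWithin m f s) (iteratedDerivWithin (m + 1) f s x) s x := by
  rw [iteratedDerivWithin_succ]
  exact (hf.differentiableOn_iteratedDerivWithin (mod_cast hm) hs x hx).hasDerivWithinAt

theorem exists_Ico_abs_derivWithin_le_mul (n : ℕ) {f : ℝ → ℝ} {a b : ℝ} (hab : a < b)
    (hf : ContDiffOn ℝ (n + 1 : ℕ) f (Ico a b))
    (hreg : IsRegularOn (iteratedDerivWithin (n + 1) f (Ico a b)) (Ico a b)) :
    ∃ u v, Ico u v ⊆ Ico a b ∧ (b - a) / 4 ^ n ≤ v - u ∧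
      ∀ x ∈ Ico u v, ∀ y ∈ Ico a b,
        |derivWithin f (Ico a b) y| ≤ 4 ^ (n + 1) ^ 2 * |derivWithin f (Ico a b) x| := by
  induction n using Nat.strong_induction_on with
  | _ n ih =>
  by_cases hlower : ∃ m < n, IsRegularOn (iteratedDerivWithin (m + 1) f (Ico a b)) (Ico a b)
  · obtain ⟨m, hmn, hregm⟩ := hlower
    obtain ⟨u, v, hsub, hlen, hbound⟩ :=
      ih m hmn (hf.of_le (by exact_mod_cast Nat.succ_le_succ hmn.le)) hregm
    have := sub_pos.2 hab
    refine ⟨u, v, hsub, le_trans ?_ hlen, fun x hx y hy => (hbound x hx y hy).trans ?_⟩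
    · gcongr
      norm_num
    · gcongr
      norm_num
  · push Not at hlower
    obtain ⟨u, v, hsub, hlen, hbound⟩ :=
      exists_Ico_abs_le_mul_abs_of_chain (g := fun j => iteratedDerivWithin (j + 1) f (Ico a b))
        n hab (fun j hj x hx => hf.hasDerivWithinAt_iteratedDerivWithin (uniqueDiffOn_Ico a b)
          (by omega) hx) hlower hreg
    simp only [zero_add, iteratedDerivWithin_one] at hbound
    exact ⟨u, v, hsub, hlen.ge, hbound⟩

/-- For a k-regular function `f` on `[a,b)` (i.e. `sup |f⁽ᵏ⁾| ≤ 2 inf |f⁽ᵏ⁾|`),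
there is an interval `J ⊆ [a,b)` with `|J| > δₖ (b-a)` on which
`|f'| ≥ ρₖ · sup_{[a,b)} |f'|`. -/
theorem stmt_9 : ∀ k : ℕ, 1 ≤ k → ∃ δ > (0:ℝ), ∃ ρ > (0:ℝ),
    ∀ a b : ℝ, a < b → ∀ f : ℝ → ℝ, ContDiffOn ℝ k f (Set.Ico a b) →
    (∀ x ∈ Set.Ico a b, ∀ y ∈ Set.Ico a b,
      |iteratedDerivWithin k f (Set.Ico a b) x| ≤
        2 * |iteratedDerivWithin k f (Set.Ico a b) y|) →
    ∃ u v : ℝ, Set.Ico u v ⊆ Set.Ico a b ∧ δ * (b - a) < v - u ∧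
      ∀ x ∈ Set.Ico u v, ∀ y ∈ Set.Ico a b,
        ρ * |derivWithin f (Set.Ico a b) y| ≤ |derivWithin f (Set.Ico a b) x| := by
  intro k hk
  obtain ⟨n, rfl⟩ := Nat.exists_eq_add_of_le' hk
  refine ⟨1 / 4 ^ (n + 1), by positivity, 1 / 4 ^ (n + 1) ^ 2, by positivity, ?_⟩
  intro a b hab f hf hreg
  obtain ⟨u, v, hsub, hlen, hbound⟩ := exists_Ico_abs_derivWithin_le_mul n hab hf hreg
  refine ⟨u, v, hsub, lt_of_lt_of_le ?_ hlen, fun x hx y hy => ?_⟩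
  · rw [pow_succ, one_div_mul_eq_div, ← div_div]
    exact div_lt_self (by have := sub_pos.2 hab; positivity) (by norm_num)
  · rw [one_div_mul_eq_div, div_le_iff₀ (by positivity), mul_comm]
    exact hbound x hx y hy
end

section
/- Let (Ω, ℬ, ω) be a probability space, b ≥ 2 an integer, n ∈ ℕ, and f, g : Ω → ℝ measurable with sup_x |f(x) − g(x)| ≤ b^{−n}. Then |H(f_*ω, 𝓛_n) − H(g_*ω, 𝓛_n)| ≤ C for an absolute constant C, where 𝓛_n is the level-n b-adic partition of ℝ and H denotes base-b Shannon entropy. -/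
/-!
Replace `f` and `g` by the integer-valued maps `F = ⌊f bⁿ⌋` and `G = ⌊g bⁿ⌋`, whose laws give the
cell masses of `f_*ω` and `g_*ω`. Since `|F - G| ≤ 1`, the pair `(F, G)` is determined by `G` and
the offset `F - G ∈ {-1, 0, 1}`, so `H(F) ≤ H(F, G) ≤ H(G) + log 3`, and symmetrically. Dividing
by `log b` gives the bound with `C = log_b 3`.
-/

/-- Base-`b` Shannon entropy of a measure with respect to the level-`m` b-adic partition. -/
noncomputable def badicEnt (b : ℕ) (μ : MeasureTheory.Measure ℝ) (m : ℤ) : ℝ :=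
  ∑' j : ℤ,
    -(μ (Set.Ico ((j : ℝ) / (b : ℝ) ^ m) (((j : ℝ) + 1) / (b : ℝ) ^ m))).toReal *
      Real.logb b (μ (Set.Ico ((j : ℝ) / (b : ℝ) ^ m) (((j : ℝ) + 1) / (b : ℝ) ^ m))).toReal

open Real Finset MeasureTheory

lemma Real.mul_log_le_mul_log_of_le {x s : ℝ} (hx : 0 ≤ x) (hxs : x ≤ s) :
    x * log x ≤ x * log s := by
  rcases hx.eq_or_lt with rfl | hx
  · simp
  · exact mul_le_mul_of_nonneg_left (log_le_log hx hxs) hx.le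

lemma Real.negMulLog_sum_le {ι : Type*} {s : Finset ι} {x : ι → ℝ} (hx : ∀ i ∈ s, 0 ≤ x i) :
    negMulLog (∑ i ∈ s, x i) ≤ ∑ i ∈ s, negMulLog (x i) := by
  simp only [negMulLog, neg_mul, sum_mul, ← sum_neg_distrib]
  exact sum_le_sum fun i hi =>
    neg_le_neg (mul_log_le_mul_log_of_le (hx i hi) (single_le_sum hx hi))

lemma Real.sum_negMulLog_le {ι : Type*} {s : Finset ι} {x : ι → ℝ} (hx : ∀ i ∈ s, 0 ≤ x i) :
    ∑ i ∈ s, negMulLog (x i) ≤ negMulLog (∑ i ∈ s, x i) + (∑ i ∈ s, x i) * log #s := by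
  rcases s.eq_empty_or_nonempty with rfl | hs
  · simp
  have hN : (0 : ℝ) < #s := by exact_mod_cast hs.card_pos
  have jensen := concaveOn_negMulLog.le_map_sum (t := s) (w := fun _ => (#s : ℝ)⁻¹) (p := x)
    (fun _ _ => by positivity) (by simp [hN.ne']) (fun i hi => hx i hi)
  simp only [smul_eq_mul, ← mul_sum] at jensen
  rw [mul_comm, negMulLog_mul, negMulLog, log_inv] at jensen
  field_simp at jensen
  linarith

section Band

variable {p q : ℤ → ℝ} {B : ℤ → ℤ → ℝ} {D : Finset ℤ}

lemma sum_negMulLog_band_le (hB : ∀ j d, 0 ≤ B j d) (hq : ∀ k, q k = ∑ d ∈ D, B (k - d) d)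
    (k : ℤ) : ∑ d ∈ D, negMulLog (B (k - d) d) ≤ negMulLog (q k) + q k * log #D :=
  hq k ▸ sum_negMulLog_le fun _ _ => hB _ _

lemma summable_negMulLog_band (hB : ∀ j d, 0 ≤ B j d) (hp1 : ∀ j, p j ≤ 1)
    (hp : ∀ j, p j = ∑ d ∈ D, B j d) (hq : ∀ k, q k = ∑ d ∈ D, B (k - d) d)
    (hqs : Summable fun k => negMulLog (q k)) (hq_sum : Summable q) {d : ℤ} (hd : d ∈ D) :
    Summable fun k => negMulLog (B (k - d) d) := by
  have hB1 : ∀ j, ∀ d ∈ D, B j d ≤ 1 := fun j d hd =>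
    (hp j ▸ single_le_sum (fun d _ => hB j d) hd).trans (hp1 j)
  have hnonneg : ∀ k, ∀ d ∈ D, 0 ≤ negMulLog (B (k - d) d) := fun k d hd =>
    negMulLog_nonneg (hB _ _) (hB1 _ _ hd)
  refine .of_nonneg_of_le (hnonneg · d hd) (fun k => ?_) (hqs.add (hq_sum.mul_right (log #D)))
  exact (single_le_sum (hnonneg k) hd).trans (sum_negMulLog_band_le hB hq k)

/-- `B j d` is the mass of a coupling of `p` and `q` at `(j, j + d)`; the bound is
`H(p) ≤ H(p, q) = H(q, offset) ≤ H(q) + log #D`. -/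
theorem tsum_negMulLog_le_of_band (hB : ∀ j d, 0 ≤ B j d) (hp1 : ∀ j, p j ≤ 1)
    (hp : ∀ j, p j = ∑ d ∈ D, B j d) (hq : ∀ k, q k = ∑ d ∈ D, B (k - d) d)
    (hqs : Summable fun k => negMulLog (q k)) (hq_sum : Summable q) :
    Summable (fun j => negMulLog (p j)) ∧
      ∑' j, negMulLog (p j) ≤ ∑' k, negMulLog (q k) + (∑' k, q k) * log #D := by
  have hcol : ∀ d ∈ D, Summable fun k => negMulLog (B (k - d) d) := fun d hd =>
    summable_negMulLog_band hB hp1 hp hq hqs hq_sum hd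
  have hrow : ∀ d ∈ D, Summable fun j => negMulLog (B j d) := fun d hd => by
    simpa [Function.comp_def] using (Equiv.addRight d).summable_iff.mpr (hcol d hd)
  have hp_le : ∀ j, negMulLog (p j) ≤ ∑ d ∈ D, negMulLog (B j d) := fun j =>
    hp j ▸ negMulLog_sum_le fun d _ => hB j d
  have hps : Summable fun j => negMulLog (p j) :=
    .of_nonneg_of_le (fun j => negMulLog_nonneg (hp j ▸ sum_nonneg fun d _ => hB j d) (hp1 j))
      hp_le (summable_sum hrow)
  refine ⟨hps, ?_⟩
  calc ∑' j, negMulLog (p j) ≤ ∑' j, ∑ d ∈ D, negMulLog (B j d) :=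
        hps.tsum_le_tsum hp_le (summable_sum hrow)
    _ = ∑ d ∈ D, ∑' k, negMulLog (B (k - d) d) := by
        rw [Summable.tsum_finsetSum hrow]
        exact sum_congr rfl fun d _ => ((Equiv.subRight d).tsum_eq _).symm
    _ = ∑' k, ∑ d ∈ D, negMulLog (B (k - d) d) := (Summable.tsum_finsetSum hcol).symm
    _ ≤ ∑' k, (negMulLog (q k) + q k * log #D) :=
        (summable_sum hcol).tsum_le_tsum (sum_negMulLog_band_le hB hq)
          (hqs.add (hq_sum.mul_right _))
    _ = ∑' k, negMulLog (q k) + (∑' k, q k) * log #D := by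
        rw [hqs.tsum_add (hq_sum.mul_right _), tsum_mul_right]

end Band

lemma measure_eq_sum_measure_inter_preimage_singleton {Ω β : Type*} [MeasurableSpace Ω]
    [MeasurableSpace β] [MeasurableSingletonClass β] (ω : Measure Ω) {H : Ω → β}
    (hH : Measurable H) {D : Finset β} (hD : ∀ x, H x ∈ D) (S : Set Ω) :
    ω S = ∑ d ∈ D, ω (S ∩ H ⁻¹' {d}) := by
  have hfib : ∀ d ∈ D, MeasurableSet (H ⁻¹' {d}) := fun d _ => hH (measurableSet_singleton d)
  have hcover : H ⁻¹' D = Set.univ := Set.eq_univ_of_forall hD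
  rw [← Measure.restrict_apply_univ, ← hcover, ← sum_measure_preimage_singleton D hfib]
  exact sum_congr rfl fun d hd => by rw [Measure.restrict_apply (hfib d hd), Set.inter_comm]

section IntEntropy

variable {Ω : Type*} [MeasurableSpace Ω] (ω : Measure Ω)

/-- Shannon entropy, in nats, of the law of an integer-valued map; `0` if the series diverges. -/
noncomputable def intEntropy (F : Ω → ℤ) : ℝ := ∑' j, negMulLog (ω (F ⁻¹' {j})).toReal

variable [IsProbabilityMeasure ω] {F G : Ω → ℤ}

lemma hasSum_toReal_measure_preimage_singleton (hF : Measurable F) :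
    HasSum (fun j => (ω (F ⁻¹' {j})).toReal) 1 := by
  have h : ∑' j, ω (F ⁻¹' {j}) = 1 := by
    rw [← measure_iUnion (pairwise_disjoint_fiber F) fun j => hF (measurableSet_singleton j),
      Set.iUnion_eq_univ_iff.mpr fun x => ⟨F x, rfl⟩, measure_univ]
  have hsum := ENNReal.hasSum_toReal (h ▸ ENNReal.one_ne_top)
  rwa [← ENNReal.tsum_toReal_eq fun _ => measure_ne_top _ _, h, ENNReal.toReal_one] at hsum

theorem intEntropy_le_add (hF : Measurable F) (hG : Measurable G) {D : Finset ℤ}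
    (hD : ∀ x, G x - F x ∈ D) (hGs : Summable fun k => negMulLog (ω (G ⁻¹' {k})).toReal) :
    (Summable fun j => negMulLog (ω (F ⁻¹' {j})).toReal) ∧
      intEntropy ω F ≤ intEntropy ω G + log #D := by
  have hsplit (S : Set Ω) : (ω S).toReal = ∑ d ∈ D, (ω (S ∩ (G - F) ⁻¹' {d})).toReal := by
    rw [measure_eq_sum_measure_inter_preimage_singleton ω (hG.sub hF) hD S,
      ENNReal.toReal_sum fun _ _ => measure_ne_top _ _]
  have hcol (k d : ℤ) : G ⁻¹' {k} ∩ (G - F) ⁻¹' {d} = F ⁻¹' {k - d} ∩ (G - F) ⁻¹' {d} := by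
    ext x
    simp only [Set.mem_inter_iff, Set.mem_preimage, Set.mem_singleton_iff, Pi.sub_apply]
    omega
  have hG1 := hasSum_toReal_measure_preimage_singleton ω hG
  have h := tsum_negMulLog_le_of_band (D := D) (fun _ _ => ENNReal.toReal_nonneg)
    (fun j => measureReal_le_one (μ := ω) (s := F ⁻¹' {j})) (fun j => hsplit _)
    (fun k => by rw [hsplit]; simp only [hcol]) hGs hG1.summable
  rwa [hG1.tsum_eq, one_mul] at h

theorem abs_intEntropy_sub_le (hF : Measurable F) (hG : Measurable G) {r : ℕ}
    (hFG : ∀ x, |G x - F x| ≤ r) : |intEntropy ω F - intEntropy ω G| ≤ log (2 * r + 1) := by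
  have hcard : (#(Icc (-(r : ℤ)) r) : ℝ) = 2 * r + 1 := by
    rw [Int.card_Icc]
    norm_cast
    omega
  have hD : ∀ x, G x - F x ∈ Icc (-(r : ℤ)) r := fun x => mem_Icc.mpr (abs_le.mp (hFG x))
  have hD' : ∀ x, F x - G x ∈ Icc (-(r : ℤ)) r := fun x =>
    mem_Icc.mpr (abs_le.mp (abs_sub_comm (G x) (F x) ▸ hFG x))
  by_cases hGs : Summable fun k => negMulLog (ω (G ⁻¹' {k})).toReal
  · obtain ⟨hFs, hFle⟩ := intEntropy_le_add ω hF hG hD hGs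
    have hGle := (intEntropy_le_add ω hG hF hD' hFs).2
    rw [hcard] at hFle hGle
    exact abs_sub_le_iff.mpr ⟨by linarith, by linarith⟩
  · have hFs : ¬Summable fun j => negMulLog (ω (F ⁻¹' {j})).toReal := fun hFs =>
      hGs (intEntropy_le_add ω hG hF hD' hFs).1
    rw [intEntropy, intEntropy, tsum_eq_zero_of_not_summable hFs,
      tsum_eq_zero_of_not_summable hGs, sub_zero, abs_zero]
    exact log_nonneg (by linarith)

end IntEntropy

lemma Int.abs_floor_sub_floor_le {x y : ℝ} {r : ℕ} (h : |x - y| ≤ r) : |⌊x⌋ - ⌊y⌋| ≤ r := by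
  obtain ⟨h₁, h₂⟩ := abs_le.mp h
  have hx := Int.floor_le x
  have hy := Int.floor_le y
  have hx' := Int.lt_floor_add_one x
  have hy' := Int.lt_floor_add_one y
  have hlt : |(⌊x⌋ - ⌊y⌋ : ℝ)| < r + 1 := abs_lt.mpr ⟨by linarith, by linarith⟩
  exact_mod_cast Int.lt_add_one_iff.mp (by exact_mod_cast hlt)

lemma mem_Ico_div_iff_floor_eq {c : ℝ} (hc : 0 < c) (x : ℝ) (j : ℤ) :
    x ∈ Set.Ico (j / c) ((j + 1) / c) ↔ ⌊x * c⌋ = j := by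
  rw [Int.floor_eq_iff, Set.mem_Ico, div_le_iff₀ hc, lt_div_iff₀ hc]

lemma badicEnt_map {Ω : Type*} [MeasurableSpace Ω] (ω : Measure Ω) {b : ℕ} (hb : 0 < b)
    {f : Ω → ℝ} (hf : Measurable f) (m : ℤ) :
    badicEnt b (ω.map f) m = intEntropy ω (fun x => ⌊f x * (b : ℝ) ^ m⌋) / log b := by
  have hc : (0 : ℝ) < (b : ℝ) ^ m := zpow_pos (by exact_mod_cast hb) m
  rw [badicEnt, intEntropy, ← tsum_div_const]
  congr 1 with j
  have hcell : f ⁻¹' Set.Ico (j / (b : ℝ) ^ m) ((j + 1) / (b : ℝ) ^ m) =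
      (fun x => ⌊f x * (b : ℝ) ^ m⌋) ⁻¹' {j} := by
    ext x
    exact mem_Ico_div_iff_floor_eq hc (f x) j
  rw [Measure.map_apply hf measurableSet_Ico, hcell, negMulLog, logb, neg_mul, neg_mul, neg_div,
    mul_div_assoc]

/-- If `sup |f - g| ≤ b⁻ⁿ` then the level-`n` entropies of `f_*ω` and `g_*ω`
differ by at most an absolute constant. -/
theorem stmt_11 (b : ℕ) (hb : 2 ≤ b) :
    ∃ C > (0:ℝ), ∀ (Ω : Type) (_ : MeasurableSpace Ω) (ω : MeasureTheory.Measure Ω),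
      MeasureTheory.IsProbabilityMeasure ω →
      ∀ n : ℕ, ∀ f g : Ω → ℝ, Measurable f → Measurable g →
        (∀ x, |f x - g x| ≤ (b : ℝ) ^ (-(n : ℤ))) →
        |badicEnt b (ω.map f) (n : ℤ) - badicEnt b (ω.map g) (n : ℤ)| ≤ C := by
  have hb1 : (1 : ℝ) < b := by exact_mod_cast hb
  refine ⟨logb b 3, logb_pos hb1 (by norm_num), fun Ω _ ω _ n f g hf hg hfg => ?_⟩
  set c : ℝ := (b : ℝ) ^ (n : ℤ)
  have hc : 0 < c := zpow_pos (by positivity) _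
  have hfloor (x : Ω) : |⌊g x * c⌋ - ⌊f x * c⌋| ≤ (1 : ℕ) := by
    refine Int.abs_floor_sub_floor_le ?_
    rw [← sub_mul, abs_mul, abs_of_pos hc, abs_sub_comm, Nat.cast_one, ← inv_mul_cancel₀ hc.ne',
      ← zpow_neg]
    exact mul_le_mul_of_nonneg_right (hfg x) hc.le
  have hent := abs_intEntropy_sub_le ω (hf.mul_const c).floor (hg.mul_const c).floor hfloor
  rw [badicEnt_map ω (by omega) hf, badicEnt_map ω (by omega) hg, ← sub_div, abs_div,
    abs_of_pos (log_pos hb1), logb]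
  rw [Nat.cast_one, show (2 : ℝ) * 1 + 1 = 3 by norm_num] at hent
  exact div_le_div_of_nonneg_right hent (log_pos hb1).le
end

section
/- Let b ≥ 2 be an integer, λ ∈ (1/b,1), φ : ℝ → ℝ a ℤ-periodic C¹ function, and γ = 1/(bλ). For i ∈ {0,...,b−1} define g_i(x,y) = ((x+i)/b, λy + φ((x+i)/b)). For j = (j_1 j_2 ...) ∈ {0,...,b−1}^{ℤ₊} define Y(x,j) = −∑_{n=1}^∞ γ^n φ'(x/b^n + j_1/b^n + j_2/b^{n−1} + ... + j_n/b), Γ_j(x) = ∫_0^x Y(t,j) dt, and π_j(x,y) = y − Γ_j(x). Then for any j ∈ Σ and any finite word i = i_1...i_n (writing g_i = g_{i_1}∘...∘g_{i_n} and i* = i_n...i_1 for the reversed word): π_j(g_i(x,y)) = λ^n · π_{i*j}(x,y) + π_j(g_i(0,0)) for all (x,y) ∈ [0,1) × ℝ, where i*j denotes the concatenation of the reversed word with j. -/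
open scoped BigOperators

/-- The inverse branch maps `gᵢ(x,y) = ((x+i)/b, λy + φ((x+i)/b))`. -/
noncomputable def Wg (b : ℕ) (lam : ℝ) (φ : ℝ → ℝ) (i : Fin b) (p : ℝ × ℝ) : ℝ × ℝ :=
  ((p.1 + (i : ℕ)) / b, lam * p.2 + φ ((p.1 + (i : ℕ)) / b))

/-- `g_{i₁} ∘ g_{i₂} ∘ ⋯ ∘ g_{iₙ}` for a finite word `i₁ i₂ ⋯ iₙ`. -/
noncomputable def Wgword (b : ℕ) (lam : ℝ) (φ : ℝ → ℝ) : List (Fin b) → ℝ × ℝ → ℝ × ℝ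
  | [], p => p
  | a :: l, p => Wg b lam φ a (Wgword b lam φ l p)

/-- The slope field `Y(x, j) = -∑ γⁿ φ'(x/bⁿ + j₁/bⁿ + ⋯ + jₙ/b)` with `γ = 1/(bλ)`
(here `j m` denotes `j_{m+1}`). -/
noncomputable def WY (b : ℕ) (lam : ℝ) (φ : ℝ → ℝ) (x : ℝ) (j : ℕ → Fin b) : ℝ :=
  -∑' n : ℕ, (1 / ((b : ℝ) * lam)) ^ (n + 1) *
    deriv φ ((x + ∑ m ∈ Finset.range (n + 1), ((j m : ℕ) : ℝ) * (b : ℝ) ^ m) /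
      (b : ℝ) ^ (n + 1))

/-- `Γ_j(x) = ∫₀ˣ Y(t, j) dt`. -/
noncomputable def WΓ (b : ℕ) (lam : ℝ) (φ : ℝ → ℝ) (j : ℕ → Fin b) (x : ℝ) : ℝ :=
  ∫ t in (0:ℝ)..x, WY b lam φ t j

/-- The flow projection `π_j(x,y) = y - Γ_j(x)`. -/
noncomputable def Wπ (b : ℕ) (lam : ℝ) (φ : ℝ → ℝ) (j : ℕ → Fin b) (p : ℝ × ℝ) : ℝ :=
  p.2 - WΓ b lam φ j p.1

/-- Concatenation of a finite word with an infinite sequence. -/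
def seqAppend {b : ℕ} (l : List (Fin b)) (j : ℕ → Fin b) : ℕ → Fin b :=
  fun m => if h : m < l.length then l.get ⟨m, h⟩ else j (m - l.length)

/-!
Prepending a symbol `a` to the sequence `j` rescales the series defining `Y` by `γ = 1/(bλ)` and
peels off its first term, which gives
`Y((x + a)/b, j) = bλ · Y(x, aj) + φ'((x + a)/b)`.
Integrating from `0` to `x` (after the substitution `t = (s + a)/b`) turns this into
`Γ_j((x + a)/b) = Γ_j(a/b) + λ Γ_{aj}(x) + φ((x + a)/b) - φ(a/b)`, i.e. the transition formula for a
one-letter word; the general case follows by induction on the word.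
-/

open Function intervalIntegral

theorem Function.Periodic.deriv {𝕜 F : Type*} [NontriviallyNormedField 𝕜] [NormedAddCommGroup F]
    [NormedSpace 𝕜 F] {f : 𝕜 → F} {c : 𝕜} (h : Periodic f c) : Periodic (deriv f) c := by
  intro x
  rw [← deriv_comp_add_const, h.funext]

theorem intervalIntegral.integral_comp_add_div_const {E : Type*} [NormedAddCommGroup E]
    [NormedSpace ℝ E] (f : ℝ → E) {c : ℝ} (hc : c ≠ 0) (a x : ℝ) :
    ∫ s in (0:ℝ)..x, f ((s + a) / c) = c • ∫ t in a / c..(x + a) / c, f t := by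
  simpa only [add_div, zero_div, zero_add] using integral_comp_div_add f hc (a / c) (a := 0) (b := x)

section seqAppend

variable {b : ℕ}

@[simp]
theorem seqAppend_nil (j : ℕ → Fin b) : seqAppend [] j = j := by
  funext m
  simp [seqAppend]

@[simp]
theorem seqAppend_singleton_zero (a : Fin b) (j : ℕ → Fin b) : seqAppend [a] j 0 = a := rfl

@[simp]
theorem seqAppend_singleton_succ (a : Fin b) (j : ℕ → Fin b) (m : ℕ) :
    seqAppend [a] j (m + 1) = j m := by
  simp [seqAppend]

theorem seqAppend_append (l₁ l₂ : List (Fin b)) (j : ℕ → Fin b) :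
    seqAppend (l₁ ++ l₂) j = seqAppend l₁ (seqAppend l₂ j) := by
  funext m
  simp only [seqAppend, List.length_append, List.get_eq_getElem]
  by_cases h₁ : m < l₁.length
  · rw [dif_pos (by omega), dif_pos h₁, List.getElem_append_left h₁]
  by_cases h₂ : m < l₁.length + l₂.length
  · rw [dif_pos h₂, dif_neg h₁, dif_pos (by omega), List.getElem_append_right (by omega)]
  · rw [dif_neg h₂, dif_neg h₁, dif_neg (by omega), Nat.sub_add_eq]

end seqAppend

noncomputable def WYterm (b : ℕ) (lam : ℝ) (φ : ℝ → ℝ) (j : ℕ → Fin b) (x : ℝ) (n : ℕ) : ℝ :=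
  (1 / ((b : ℝ) * lam)) ^ (n + 1) *
    deriv φ ((x + ∑ m ∈ Finset.range (n + 1), ((j m : ℕ) : ℝ) * (b : ℝ) ^ m) / (b : ℝ) ^ (n + 1))

section Series

variable {b : ℕ} {lam : ℝ} {φ : ℝ → ℝ}

theorem WY_eq_neg_tsum (x : ℝ) (j : ℕ → Fin b) : WY b lam φ x j = -∑' n, WYterm b lam φ j x n :=
  rfl

theorem WYterm_seqAppend_singleton_zero (a : Fin b) (j : ℕ → Fin b) (x : ℝ) :
    WYterm b lam φ (seqAppend [a] j) x 0 = 1 / (b * lam) * deriv φ ((x + (a : ℕ)) / b) := by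
  simp [WYterm]

theorem WYterm_seqAppend_singleton_succ (hb : (b : ℝ) ≠ 0) (a : Fin b) (j : ℕ → Fin b) (x : ℝ)
    (n : ℕ) :
    WYterm b lam φ (seqAppend [a] j) x (n + 1) =
      1 / (b * lam) * WYterm b lam φ j ((x + (a : ℕ)) / b) n := by
  have hsum : ∑ m ∈ Finset.range (n + 1 + 1), ((seqAppend [a] j m : ℕ) : ℝ) * (b : ℝ) ^ m =
      (a : ℕ) + b * ∑ m ∈ Finset.range (n + 1), ((j m : ℕ) : ℝ) * (b : ℝ) ^ m := by
    rw [Finset.sum_range_succ', Finset.mul_sum, add_comm]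
    simp only [seqAppend_singleton_succ, seqAppend_singleton_zero, pow_succ, pow_zero, mul_one]
    congr 1
    exact Finset.sum_congr rfl fun _ _ => by ring
  rw [WYterm, WYterm, hsum, pow_succ _ (n + 1), ← mul_assoc, mul_comm _ (1 / _)]
  congr 2
  field_simp
  ring

variable (hbl : 1 < (b : ℝ) * lam) {C : ℝ} (hC : ∀ x, ‖deriv φ x‖ ≤ C)
include hbl hC

theorem norm_WYterm_le (j : ℕ → Fin b) (x : ℝ) (n : ℕ) :
    ‖WYterm b lam φ j x n‖ ≤ C * (1 / (b * lam)) ^ (n + 1) := by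
  have hγ : 0 ≤ 1 / ((b : ℝ) * lam) := one_div_nonneg.mpr (by linarith)
  rw [WYterm, norm_mul, norm_pow, Real.norm_of_nonneg hγ, mul_comm C]
  exact mul_le_mul_of_nonneg_left (hC _) (pow_nonneg hγ _)

omit hC in
theorem summable_geometric_majorant : Summable fun n : ℕ => C * (1 / ((b : ℝ) * lam)) ^ (n + 1) :=
  ((summable_nat_add_iff 1).mpr (summable_geometric_of_lt_one (one_div_nonneg.mpr (by linarith))
    ((div_lt_one (by linarith)).mpr hbl))).mul_left C

theorem summable_WYterm (j : ℕ → Fin b) (x : ℝ) : Summable (WYterm b lam φ j x) :=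
  Summable.of_norm_bounded (summable_geometric_majorant hbl) (norm_WYterm_le hbl hC j x)

theorem continuous_WY (hφ : Continuous (deriv φ)) (j : ℕ → Fin b) :
    Continuous fun x => WY b lam φ x j :=
  (continuous_tsum (fun n => continuous_const.mul (hφ.comp (by fun_prop)))
    (summable_geometric_majorant hbl) fun n x => norm_WYterm_le hbl hC j x n).neg

theorem WY_div_add (a : Fin b) (j : ℕ → Fin b) (x : ℝ) :
    WY b lam φ ((x + (a : ℕ)) / b) j =
      b * lam * WY b lam φ x (seqAppend [a] j) + deriv φ ((x + (a : ℕ)) / b) := by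
  have hb : (b : ℝ) ≠ 0 := by rintro h; simp [h] at hbl; linarith
  have hlam : lam ≠ 0 := by rintro rfl; simp at hbl; linarith
  rw [WY_eq_neg_tsum, WY_eq_neg_tsum, (summable_WYterm hbl hC _ x).tsum_eq_zero_add,
    WYterm_seqAppend_singleton_zero]
  simp only [WYterm_seqAppend_singleton_succ hb, tsum_mul_left]
  field_simp
  ring

end Series

section Transition

variable {b : ℕ} {lam : ℝ} {φ : ℝ → ℝ} (hbl : 1 < (b : ℝ) * lam) (hφ : ContDiff ℝ 1 φ) {C : ℝ}
  (hC : ∀ x, ‖deriv φ x‖ ≤ C)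
include hbl hφ hC

theorem WΓ_div_add (a : Fin b) (j : ℕ → Fin b) (x : ℝ) :
    WΓ b lam φ j ((x + (a : ℕ)) / b) =
      WΓ b lam φ j ((a : ℕ) / b) + lam * WΓ b lam φ (seqAppend [a] j) x +
        φ ((x + (a : ℕ)) / b) - φ ((a : ℕ) / b) := by
  have hb : (b : ℝ) ≠ 0 := by rintro h; simp [h] at hbl; linarith
  have hd : Continuous (deriv φ) := hφ.continuous_deriv le_rfl
  have hY := continuous_WY hbl hC hd j
  have hY' := continuous_WY hbl hC hd (seqAppend [a] j)
  have hsubst : ∫ s in (0:ℝ)..x, WY b lam φ ((s + (a : ℕ)) / b) j =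
      b * (WΓ b lam φ j ((x + (a : ℕ)) / b) - WΓ b lam φ j ((a : ℕ) / b)) := by
    rw [integral_comp_add_div_const (fun t => WY b lam φ t j) hb, smul_eq_mul, WΓ, WΓ,
      integral_interval_sub_left (hY.intervalIntegrable _ _) (hY.intervalIntegrable _ _)]
  have hFTC : ∫ s in (0:ℝ)..x, deriv φ ((s + (a : ℕ)) / b) =
      b * (φ ((x + (a : ℕ)) / b) - φ ((a : ℕ) / b)) := by
    rw [integral_comp_add_div_const _ hb, smul_eq_mul, integral_deriv_eq_sub
      (fun t _ => (hφ.differentiable one_ne_zero).differentiableAt) (hd.intervalIntegrable _ _)]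
  have hsplit : ∫ s in (0:ℝ)..x, WY b lam φ ((s + (a : ℕ)) / b) j =
      b * lam * WΓ b lam φ (seqAppend [a] j) x + b * (φ ((x + (a : ℕ)) / b) - φ ((a : ℕ) / b)) := by
    have hd' : Continuous fun s : ℝ => deriv φ ((s + (a : ℕ)) / b) := hd.comp (by fun_prop)
    simp only [WY_div_add hbl hC]
    rw [integral_add ((hY'.const_mul _).intervalIntegrable _ _) (hd'.intervalIntegrable _ _),
      integral_const_mul, hFTC, WΓ]
  have := hsubst.symm.trans hsplit
  field_simp at this ⊢
  linear_combination this

theorem Wπ_Wg (a : Fin b) (j : ℕ → Fin b) (p : ℝ × ℝ) :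
    Wπ b lam φ j (Wg b lam φ a p) =
      lam * Wπ b lam φ (seqAppend [a] j) p + Wπ b lam φ j (Wg b lam φ a (0, 0)) := by
  simp only [Wπ, Wg, WΓ_div_add hbl hφ hC, zero_add]
  ring

theorem Wπ_Wgword (l : List (Fin b)) (j : ℕ → Fin b) (p : ℝ × ℝ) :
    Wπ b lam φ j (Wgword b lam φ l p) =
      lam ^ l.length * Wπ b lam φ (seqAppend l.reverse j) p +
        Wπ b lam φ j (Wgword b lam φ l (0, 0)) := by
  induction l generalizing j with
  | nil => simp [Wgword, Wπ, WΓ]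
  | cons a l ih =>
    rw [Wgword, Wgword, Wπ_Wg hbl hφ hC, Wπ_Wg hbl hφ hC a j (Wgword b lam φ l (0, 0)), ih,
      List.reverse_cons, seqAppend_append, List.length_cons]
    ring

end Transition

/-- Transition formula: `π_j(g_i(x,y)) = λ^|i| π_{i*j}(x,y) + π_j(g_i(0,0))`. -/
theorem stmt_13 (b : ℕ) (hb : 2 ≤ b) (lam : ℝ) (hlam : 1 / b < lam ∧ lam < 1)
    (φ : ℝ → ℝ) (hφ : ContDiff ℝ 1 φ) (hφp : ∀ x, φ (x + 1) = φ x)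
    (j : ℕ → Fin b) (l : List (Fin b)) :
    ∀ x ∈ Set.Ico (0:ℝ) 1, ∀ y : ℝ,
      Wπ b lam φ j (Wgword b lam φ l (x, y)) =
        lam ^ l.length * Wπ b lam φ (seqAppend l.reverse j) (x, y) +
          Wπ b lam φ j (Wgword b lam φ l (0, 0)) := by
  intro x _ y
  have hbl : 1 < (b : ℝ) * lam := (div_lt_iff₀' (by positivity)).mp hlam.1
  obtain ⟨C, hC⟩ := isBounded_iff_forall_norm_le.mp
    ((Periodic.deriv hφp).isBounded_of_continuous one_ne_zero (hφ.continuous_deriv le_rfl))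
  exact Wπ_Wgword hbl hφ (fun t => hC _ ⟨t, rfl⟩) l j (x, y)
end

section
/- Let F_1 be a family of real analytic functions f : ℝ → ℝ with f(0) = 0, none identically zero, which is compact in the topology of uniform C^k-convergence on [0,1] for every k. Then there exist ε₁ > 0 and a positive integer Q₁ such that for every f ∈ F_1: (a) sup_{x∈[0,1]} |f'(x)| ≥ ε₁, and (b) for every x ∈ [0,1] there exists k ∈ {1,...,Q₁} with |f^{(k)}(x)| ≥ ε₁. -/
/-!
If the bounds failed, compactness would produce functions `fₙ ∈ F` (and points `xₙ → a` in
`[0, 1]`) whose relevant derivatives tend to `0`, and a `C^∞`-limit `g ∈ F`. Then either `g'`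
vanishes on `[0, 1]`, or all derivatives `g^{(k)}(a)`, `k ≥ 1`, vanish. In both cases `g'` is
analytic and vanishes near a point, so `g` is constant, contradicting `g(0) = 0` and `g ≢ 0`.
-/

open Filter Set Topology

section Analytic

variable {𝕜 E : Type*} [RCLike 𝕜] [NormedAddCommGroup E] [NormedSpace 𝕜 E] [CompleteSpace E]
  {f : 𝕜 → E}

lemma AnalyticAt.eventuallyEq_zero_of_iteratedDeriv_eq_zero {a : 𝕜} (hf : AnalyticAt 𝕜 f a)
    (h : ∀ k, iteratedDeriv k f a = 0) : f =ᶠ[𝓝 a] 0 :=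
  analyticOrderAt_eq_top.mp <| ENat.eq_top_iff_forall_ge.mpr fun _ =>
    (natCast_le_analyticOrderAt_iff_iteratedDeriv_eq_zero hf).mpr fun i _ => h i

lemma AnalyticOnNhd.eq_of_deriv_eventuallyEq_zero (hf : AnalyticOnNhd 𝕜 f univ) {a : 𝕜}
    (h : deriv f =ᶠ[𝓝 a] 0) (x y : 𝕜) : f x = f y :=
  is_const_of_deriv_eq_zero (fun z => (hf z (mem_univ z)).differentiableAt)
    (congrFun (hf.deriv.eq_of_eventuallyEq analyticOnNhd_const h)) x y

lemma AnalyticOnNhd.eq_of_iteratedDeriv_succ_eq_zero (hf : AnalyticOnNhd 𝕜 f univ) {a : 𝕜}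
    (h : ∀ k, iteratedDeriv (k + 1) f a = 0) (x y : 𝕜) : f x = f y :=
  hf.eq_of_deriv_eventuallyEq_zero
    ((hf.deriv a (mem_univ a)).eventuallyEq_zero_of_iteratedDeriv_eq_zero fun k => by
      rw [← iteratedDeriv_succ']; exact h k) x y

end Analytic

lemma eq_zero_of_tendsto_of_abs_lt_inv_succ {v : ℕ → ℝ} {c : ℝ} (hv : Tendsto v atTop (𝓝 c))
    {φ : ℕ → ℕ} (hφ : StrictMono φ) (hsmall : ∀ᶠ m in atTop, |v m| < 1 / (φ m + 1)) : c = 0 :=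
  tendsto_nhds_unique hv <| squeeze_zero_norm' (hsmall.mono fun _ h => h.le)
    (tendsto_one_div_add_atTop_nhds_zero_nat.comp hφ.tendsto_atTop)

lemma TendstoUniformlyOn.comp_tendsto {ι ι' α β : Type*} [UniformSpace β] {F : ι → α → β}
    {f : α → β} {p : Filter ι} {s : Set α} (h : TendstoUniformlyOn F f p s) {ψ : ι' → ι}
    {q : Filter ι'} (hψ : Tendsto ψ q p) : TendstoUniformlyOn (fun n => F (ψ n)) f q s :=
  fun u hu => hψ.eventually (h u hu)

def IsSeqCompactCInftyOn (F : Set (ℝ → ℝ)) (s : Set ℝ) : Prop :=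
  ∀ f : ℕ → ℝ → ℝ, (∀ m, f m ∈ F) → ∃ g ∈ F, ∃ φ : ℕ → ℕ, StrictMono φ ∧ ∀ k : ℕ,
    TendstoUniformlyOn (fun m => iteratedDeriv k (f (φ m))) (iteratedDeriv k g) atTop s

namespace IsSeqCompactCInftyOn

variable {F : Set (ℝ → ℝ)} {s : Set ℝ}

lemma exists_subseq_tendsto (hF : IsSeqCompactCInftyOn F s) (hs : IsCompact s)
    {u : ℕ → ℝ → ℝ} (hu : ∀ n, u n ∈ F) {x : ℕ → ℝ} (hx : ∀ n, x n ∈ s) :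
    ∃ g ∈ F, ∃ a ∈ s, ∃ φ : ℕ → ℕ, StrictMono φ ∧
      (∀ k, TendstoUniformlyOn (fun m => iteratedDeriv k (u (φ m))) (iteratedDeriv k g) atTop s) ∧
      Tendsto (x ∘ φ) atTop (𝓝 a) := by
  obtain ⟨g, hg, φ, hφ, hconv⟩ := hF u hu
  obtain ⟨a, ha, ψ, hψ, hxa⟩ := hs.tendsto_subseq fun m => hx (φ m)
  exact ⟨g, hg, a, ha, φ ∘ ψ, hφ.comp hψ, fun k => (hconv k).comp_tendsto hψ.tendsto_atTop, hxa⟩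

lemma exists_forall_exists_le_abs_deriv (hF : IsSeqCompactCInftyOn F (Icc 0 1))
    (hA : ∀ f ∈ F, AnalyticOnNhd ℝ f univ) (hnc : ∀ f ∈ F, ∃ x y, f x ≠ f y) :
    ∃ ε > 0, ∀ f ∈ F, ∃ x ∈ Icc (0 : ℝ) 1, ε ≤ |deriv f x| := by
  by_contra! hsmall
  choose u hu hderiv using fun n : ℕ => hsmall (1 / (n + 1)) (by positivity)
  obtain ⟨g, hg, φ, hφ, hconv⟩ := hF u hu
  have hderiv_g : ∀ x ∈ Icc (0 : ℝ) 1, deriv g x = 0 := fun x hx => by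
    have hlim := (hconv 1).tendsto_at hx
    simp only [iteratedDeriv_one] at hlim
    exact eq_zero_of_tendsto_of_abs_lt_inv_succ hlim hφ (.of_forall fun m => hderiv (φ m) x hx)
  have hlocal : deriv g =ᶠ[𝓝 (1 / 2)] 0 :=
    eventually_of_mem (Icc_mem_nhds (by norm_num) (by norm_num)) hderiv_g
  obtain ⟨x, y, hxy⟩ := hnc g hg
  exact hxy ((hA g hg).eq_of_deriv_eventuallyEq_zero hlocal x y)

lemma exists_forall_exists_le_abs_iteratedDeriv (hF : IsSeqCompactCInftyOn F (Icc 0 1))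
    (hA : ∀ f ∈ F, AnalyticOnNhd ℝ f univ) (hnc : ∀ f ∈ F, ∃ x y, f x ≠ f y) :
    ∃ ε > 0, ∃ Q : ℕ, 1 ≤ Q ∧ ∀ f ∈ F, ∀ x ∈ Icc (0 : ℝ) 1,
      ∃ k, 1 ≤ k ∧ k ≤ Q ∧ ε ≤ |iteratedDeriv k f x| := by
  by_contra! hsmall
  choose u hu x hx hderiv using fun n : ℕ => hsmall (1 / (n + 1)) (by positivity) (n + 1) (by omega)
  obtain ⟨g, hg, a, ha, φ, hφ, hconv, hxa⟩ := hF.exists_subseq_tendsto isCompact_Icc hu hx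
  have hderiv_g : ∀ k, iteratedDeriv (k + 1) g a = 0 := fun k => by
    have hcont : ContinuousWithinAt (iteratedDeriv (k + 1) g) (Icc 0 1) a :=
      ((hA g hg).contDiff.continuous_iteratedDeriv (k + 1) le_top).continuousWithinAt
    have hlim := (hconv (k + 1)).tendsto_comp hcont
      (tendsto_nhdsWithin_iff.mpr ⟨hxa, .of_forall fun m => hx (φ m)⟩)
    refine eq_zero_of_tendsto_of_abs_lt_inv_succ hlim hφ ?_
    filter_upwards [eventually_ge_atTop k] with m hm
    exact hderiv (φ m) (k + 1) (by omega) (by have := hφ.le_apply (x := m); omega)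
  obtain ⟨y, z, hyz⟩ := hnc g hg
  exact hyz ((hA g hg).eq_of_iteratedDeriv_succ_eq_zero hderiv_g y z)

end IsSeqCompactCInftyOn

/-- Uniform lower bounds on derivatives for a compact family of nonzero real analytic
functions vanishing at `0`. -/
theorem stmt_15 (F : Set (ℝ → ℝ))
    (hA : ∀ f ∈ F, AnalyticOnNhd ℝ f Set.univ)
    (h0 : ∀ f ∈ F, f 0 = 0)
    (hne : ∀ f ∈ F, ∃ x, f x ≠ 0)
    (hcpt : ∀ f : ℕ → ℝ → ℝ, (∀ m, f m ∈ F) →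
      ∃ g ∈ F, ∃ s : ℕ → ℕ, StrictMono s ∧ ∀ k : ℕ,
        TendstoUniformlyOn (fun m => iteratedDeriv k (f (s m))) (iteratedDeriv k g)
          Filter.atTop (Set.Icc 0 1)) :
    ∃ ε > (0:ℝ), ∃ Q : ℕ, 1 ≤ Q ∧ ∀ f ∈ F,
      (∃ x ∈ Set.Icc (0:ℝ) 1, ε ≤ |deriv f x|) ∧
      (∀ x ∈ Set.Icc (0:ℝ) 1, ∃ k, 1 ≤ k ∧ k ≤ Q ∧ ε ≤ |iteratedDeriv k f x|) := by
  have hnc : ∀ f ∈ F, ∃ x y, f x ≠ f y := fun f hf => by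
    obtain ⟨x, hx⟩ := hne f hf
    exact ⟨x, 0, by rwa [h0 f hf]⟩
  obtain ⟨ε₁, hε₁, hderiv⟩ :=
    IsSeqCompactCInftyOn.exists_forall_exists_le_abs_deriv hcpt hA hnc
  obtain ⟨ε₂, hε₂, Q, hQ, hiter⟩ :=
    IsSeqCompactCInftyOn.exists_forall_exists_le_abs_iteratedDeriv hcpt hA hnc
  refine ⟨min ε₁ ε₂, lt_min hε₁ hε₂, Q, hQ, fun f hf => ⟨?_, fun x hx => ?_⟩⟩
  · obtain ⟨x, hx, hle⟩ := hderiv f hf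
    exact ⟨x, hx, (min_le_left _ _).trans hle⟩
  · obtain ⟨k, hk1, hkQ, hle⟩ := hiter f hf x hx
    exact ⟨k, hk1, hkQ, (min_le_right _ _).trans hle⟩
end

section
/- Let b ≥ 2, λ ∈ (1/b,1), and let φ be ℤ-periodic and Lipschitz such that W(x) = ∑ λ^n φ(b^n x) is not Lipschitz. Suppose r_n, s_n ∈ [0,1) are sequences of b-adic rationals of level n (i.e. r_n = (i_1 + i_2 b + ... + i_n b^{n−1})/b^n with digits i_m ∈ {0,...,b−1}, similarly s_n, coming from two fixed digit sequences), r_n → r, s_n → s, with b^m(r − s) ∉ ℤ for every m ≥ 0, and t := dist(r − s, ℤ) is a rational C^k-regulating period of W (k ≥ 2). Then t, written in lowest terms q₁/p₁, has denominator p₁ with a prime factor p not dividing b, and 1/p is a C^k-regulating period of W. -/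
open scoped BigOperators

/-!
If every prime factor of the denominator of `t = q` divided `b`, then `q.den ∣ b ^ q.den`, so
`b ^ q.den * t` would be an integer, and then so would `b ^ q.den * (r - s)`. Hence some prime
`p ∤ b` divides `q.den`. The regulating periods of `W` form an additive group containing `1`
(as `W` is `1`-periodic) and `q`; by Bézout it contains `1 / q.den`, hence its multiple `1 / p`.
-/

section RegulatingPeriods

variable {𝕜 F : Type*} [NontriviallyNormedField 𝕜] [NormedAddCommGroup F] [NormedSpace 𝕜 F]

def regulatingPeriods (f : 𝕜 → F) (n : WithTop ℕ∞) : AddSubgroup 𝕜 where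
  carrier := {a | ContDiff 𝕜 n fun x => f (x + a) - f x}
  zero_mem' := by simpa using contDiff_const
  add_mem' {a c} ha hc := by
    have hsplit : (fun x => f (x + (a + c)) - f x) =
        fun x => (f (x + c + a) - f (x + c)) + (f (x + c) - f x) := by
      funext x; rw [← add_assoc, add_right_comm x a c]; abel
    simp only [Set.mem_ofPred_eq, hsplit]
    exact (ha.comp (contDiff_id.add contDiff_const)).add hc
  neg_mem' {a} ha := by
    have hflip : (fun x => f (x + -a) - f x) = fun x => -(f (x + -a + a) - f (x + -a)) := by
      funext x; rw [neg_add_cancel_right]; abel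
    simp only [Set.mem_ofPred_eq, hflip]
    exact (ha.comp (contDiff_id.add contDiff_const)).neg

theorem mem_regulatingPeriods {f : 𝕜 → F} {n : WithTop ℕ∞} {a : 𝕜} :
    a ∈ regulatingPeriods f n ↔ ContDiff 𝕜 n fun x => f (x + a) - f x :=
  Iff.rfl

theorem Function.Periodic.mem_regulatingPeriods {f : 𝕜 → F} {c : 𝕜} (hf : Function.Periodic f c)
    (n : WithTop ℕ∞) : c ∈ regulatingPeriods f n := by
  simpa [_root_.mem_regulatingPeriods, hf _] using contDiff_const

end RegulatingPeriods

theorem Function.Periodic.weierstrass {φ : ℝ → ℝ} (hφ : Function.Periodic φ 1) (b : ℕ) (lam : ℝ) :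
    Function.Periodic (fun x => ∑' n : ℕ, lam ^ n * φ ((b : ℝ) ^ n * x)) 1 := by
  intro x
  refine tsum_congr fun n => ?_
  rw [mul_add, mul_one]
  exact congrArg _ (by simpa using hφ.nat_mul (b ^ n) ((b : ℝ) ^ n * x))

section AddSubgroupOfField

variable {K : Type*} [Field K] [CharZero K]

theorem AddSubgroup.one_div_den_mem {G : AddSubgroup K} (h1 : (1 : K) ∈ G) {q : ℚ}
    (hq : (q : K) ∈ G) : 1 / (q.den : K) ∈ G := by
  have hbezout : (q.num * q.num.gcdA q.den + q.den * q.num.gcdB q.den : K) = 1 := by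
    exact_mod_cast (Int.gcd_eq_gcd_ab q.num q.den).symm.trans (by exact_mod_cast q.reduced)
  have hden : (q.den : K) ≠ 0 := Nat.cast_ne_zero.mpr q.den_ne_zero
  have hcomb : q.num.gcdA q.den • (q : K) + q.num.gcdB q.den • (1 : K) = 1 / q.den := by
    rw [zsmul_eq_mul, zsmul_eq_mul, Rat.cast_def]
    field_simp
    linear_combination hbezout
  exact hcomb ▸ G.add_mem (G.zsmul_mem hq _) (G.zsmul_mem h1 _)

theorem AddSubgroup.one_div_mem_of_dvd {G : AddSubgroup K} {m n : ℕ} (hn : 1 / (n : K) ∈ G)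
    (hmn : m ∣ n) (hn0 : n ≠ 0) : 1 / (m : K) ∈ G := by
  obtain ⟨d, rfl⟩ := hmn
  have hd : (d : K) ≠ 0 := by exact_mod_cast right_ne_zero_of_mul hn0
  have hm : (m : K) ≠ 0 := by exact_mod_cast left_ne_zero_of_mul hn0
  have : d • (1 / ((m * d : ℕ) : K)) = 1 / m := by
    rw [nsmul_eq_mul]; push_cast; field_simp
  exact this ▸ G.nsmul_mem hn d

end AddSubgroupOfField

theorem mul_abs_sub_intCast_ne_intCast {n c : ℤ} {x : ℝ} (hx : ∀ z : ℤ, (n : ℝ) * x ≠ z) (z : ℤ) :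
    (n : ℝ) * |x - c| ≠ z := by
  intro h
  rcases abs_choice (x - c) with hpos | hneg
  · exact hx (z + n * c) (by push_cast; rw [← h, hpos]; ring)
  · exact hx (n * c - z) (by push_cast; rw [← h, hneg]; ring)

theorem Rat.exists_prime_dvd_den_not_dvd {b : ℕ} {q : ℚ}
    (hq : ∀ m : ℕ, ∀ z : ℤ, (b : ℚ) ^ m * q ≠ z) : ∃ p : ℕ, p.Prime ∧ p ∣ q.den ∧ ¬ p ∣ b := by
  by_contra! hall
  have hb : b ≠ 0 := by
    rintro rfl
    exact hq 1 0 (by simp)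
  obtain ⟨c, hc⟩ : q.den ∣ b ^ q.den := by
    refine (Nat.dvd_pow_self_iff q.den_ne_zero hb).mpr fun p hp => ?_
    rw [Nat.mem_primeFactors] at hp ⊢
    exact ⟨hp.1, hall p hp.1 hp.2.1, hb⟩
  refine hq q.den (c * q.num) ?_
  rw [← Nat.cast_pow, hc]
  push_cast
  rw [mul_comm (q.den : ℚ), mul_assoc, Rat.den_mul_eq_num]

theorem stmt_18_general (b : ℕ) (lam : ℝ)
    (φ : ℝ → ℝ) (hφp : ∀ x, φ (x + 1) = φ x)
    (W : ℝ → ℝ) (hW : ∀ x, W x = ∑' n : ℕ, lam ^ n * φ ((b : ℝ) ^ n * x))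
    (r s : ℝ)
    (hnb : ∀ m : ℕ, ∀ z : ℤ, (b : ℝ) ^ m * (r - s) ≠ (z : ℝ))
    (t : ℝ) (ht : t = |r - s - (round (r - s) : ℝ)|)
    (q : ℚ) (htq : t = (q : ℝ))
    (k : ℕ)
    (hreg : ContDiff ℝ k (fun x => W (x + t) - W x)) :
    ∃ p : ℕ, p.Prime ∧ p ∣ q.den ∧ ¬ p ∣ b ∧
      ContDiff ℝ k (fun x => W (x + 1 / (p : ℝ)) - W x) := by
  obtain ⟨p, hp, hpq, hpb⟩ : ∃ p : ℕ, p.Prime ∧ p ∣ q.den ∧ ¬ p ∣ b := by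
    refine Rat.exists_prime_dvd_den_not_dvd fun m z hz => ?_
    refine mul_abs_sub_intCast_ne_intCast (n := b ^ m) (c := round (r - s))
      (by exact_mod_cast hnb m) z ?_
    rw [← ht, htq]
    exact_mod_cast hz
  refine ⟨p, hp, hpq, hpb, ?_⟩
  have hWper : Function.Periodic W 1 := by
    simpa only [← funext hW] using Function.Periodic.weierstrass hφp b lam
  have hden : 1 / (q.den : ℝ) ∈ regulatingPeriods W k :=
    AddSubgroup.one_div_den_mem (hWper.mem_regulatingPeriods k) (htq ▸ hreg)
  exact AddSubgroup.one_div_mem_of_dvd hden hpq q.den_ne_zero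

/-- If the distance `t` of `r - s` to ℤ is a rational Cᵏ-regulating period of the
non-Lipschitz Weierstrass-type function `W`, with `r`, `s` limits of level-`n` b-adic
rationals and `bᵐ(r - s) ∉ ℤ` for all `m`, then the lowest-terms denominator of `t` has a
prime factor `p ∤ b`, and `1/p` is a Cᵏ-regulating period of `W`. -/
theorem stmt_18 (b : ℕ) (hb : 2 ≤ b) (lam : ℝ) (hlam : 1 / b < lam ∧ lam < 1)
    (φ : ℝ → ℝ) (L : NNReal) (hφ : LipschitzWith L φ) (hφp : ∀ x, φ (x + 1) = φ x)
    (W : ℝ → ℝ) (hW : ∀ x, W x = ∑' n : ℕ, lam ^ n * φ ((b : ℝ) ^ n * x))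
    (hWnl : ¬ ∃ K : NNReal, LipschitzWith K W)
    (uDig vDig : ℕ → Fin b) (r s : ℝ)
    (hr : Filter.Tendsto
      (fun n => (∑ m ∈ Finset.range n, ((uDig m : ℕ) : ℝ) * (b : ℝ) ^ m) / (b : ℝ) ^ n)
      Filter.atTop (nhds r))
    (hs : Filter.Tendsto
      (fun n => (∑ m ∈ Finset.range n, ((vDig m : ℕ) : ℝ) * (b : ℝ) ^ m) / (b : ℝ) ^ n)
      Filter.atTop (nhds s))
    (hnb : ∀ m : ℕ, ∀ z : ℤ, (b : ℝ) ^ m * (r - s) ≠ (z : ℝ))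
    (t : ℝ) (ht : t = |r - s - (round (r - s) : ℝ)|)
    (q : ℚ) (htq : t = (q : ℝ))
    (k : ℕ) (hk : 2 ≤ k)
    (hreg : ContDiff ℝ k (fun x => W (x + t) - W x)) :
    ∃ p : ℕ, p.Prime ∧ p ∣ q.den ∧ ¬ p ∣ b ∧
      ContDiff ℝ k (fun x => W (x + 1 / (p : ℝ)) - W x) :=
  stmt_18_general b lam φ hφp W hW r s hnb t ht q htq k hreg
end

section
/- Let b ≥ 2 be an integer and p > 1 an integer. For a ℤ-periodic C^5 function φ with Fourier coefficients c_k, define the pre-renormalization R̃_p φ(x) = ∑_{k∈ℤ} c_{kp} e^{2πikpx}. If 1/p is a regulating period of W^φ — i.e., x ↦ W^φ(x + 1/p) − W^φ(x) is C³ — then W^{φ − R̃_p φ}(x + 1/p) − W^{φ − R̃_p φ}(x) = W^φ(x + 1/p) − W^φ(x) for all x ∈ ℝ, where W^ψ(x) = ∑_{n≥0} λ^n ψ(b^n x) for λ ∈ (1/b,1). -/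
/-!
`R̃ₚφ` only has frequencies divisible by `p`, so it is `1/p`-periodic; as every `bⁿ` is
an integer, each `R̃ₚφ(bⁿ ·)` is `1/p`-periodic too, hence so is `W^{R̃ₚφ}`. Both `φ` and
`R̃ₚφ` are bounded, so for `|λ| < 1` the series defining `W` converge absolutely and
`W^{φ - R̃ₚφ} = W^φ - W^{R̃ₚφ}`; the periodic term cancels in the difference.
-/

open Function Complex Bornology Set
open scoped Real

theorem Function.Periodic.tsum {ι α E : Type*} [Add α] [AddCommMonoid E] [TopologicalSpace E]
    {f : ι → α → E} {c : α} (h : ∀ i, Periodic (f i) c) :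
    Periodic (fun x => ∑' i, f i x) c :=
  fun x => tsum_congr fun i => h i x

-- A non-summable series has `tsum` equal to `0`, so no summability hypothesis is needed.
theorem norm_tsum_le_tsum_norm_of_finiteDimensional {ι E : Type*} [NormedAddCommGroup E]
    [NormedSpace ℝ E] [FiniteDimensional ℝ E] (f : ι → E) :
    ‖∑' i, f i‖ ≤ ∑' i, ‖f i‖ := by
  by_cases hf : Summable f
  · exact norm_tsum_le_tsum_norm (summable_norm_iff.2 hf)
  · rw [tsum_eq_zero_of_not_summable hf, norm_zero]
    exact tsum_nonneg fun i => norm_nonneg (f i)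

section FourierSeries

variable (a : ℤ → ℂ)

theorem norm_exp_two_pi_I_mul_int_mul_nat_mul (k : ℤ) (p : ℕ) (x : ℝ) :
    ‖exp (2 * π * I * k * p * x)‖ = 1 := by
  simpa [mul_comm, mul_assoc, mul_left_comm] using norm_exp_ofReal_mul_I (2 * π * k * p * x)

theorem periodic_exp_two_pi_I_mul_int_mul_nat_mul {p : ℕ} (hp : p ≠ 0) (k : ℤ) :
    Periodic (fun x : ℝ => exp (2 * π * I * k * p * x)) (1 / p) := by
  intro x
  have hshift : 2 * π * I * k * p * ((x + 1 / p : ℝ) : ℂ)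
      = 2 * π * I * k * p * x + k * (2 * π * I) := by
    push_cast
    field_simp
  simp only [hshift, exp_add, exp_int_mul_two_pi_mul_I, mul_one]

theorem periodic_tsum_mul_exp_two_pi_I_mul_int_mul_nat_mul {p : ℕ} (hp : p ≠ 0) :
    Periodic (fun x : ℝ => ∑' k : ℤ, a k * exp (2 * π * I * k * p * x)) (1 / p) :=
  Periodic.tsum fun k x => congrArg (a k * ·) (periodic_exp_two_pi_I_mul_int_mul_nat_mul hp k x)

theorem norm_tsum_mul_exp_two_pi_I_mul_int_mul_nat_mul_le (p : ℕ) (x : ℝ) :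
    ‖∑' k : ℤ, a k * exp (2 * π * I * k * p * x)‖ ≤ ∑' k : ℤ, ‖a k‖ := by
  refine (norm_tsum_le_tsum_norm_of_finiteDimensional _).trans_eq (tsum_congr fun k => ?_)
  rw [norm_mul, norm_exp_two_pi_I_mul_int_mul_nat_mul, mul_one]

end FourierSeries

theorem summable_pow_mul_of_isBounded_range {α : Type*} {lam : ℝ} {g : α → ℝ}
    (hlam : |lam| < 1) (hg : IsBounded (range g)) (s : ℕ → α) :
    Summable fun n => lam ^ n * g (s n) := by
  obtain ⟨C, hC⟩ := isBounded_iff_forall_norm_le.1 hg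
  refine .of_norm_bounded ((summable_geometric_of_abs_lt_one hlam).abs.mul_right C) fun n => ?_
  rw [norm_mul, norm_pow, Real.norm_eq_abs, abs_pow]
  exact mul_le_mul_of_nonneg_left (hC _ (mem_range_self _)) (by positivity)

theorem periodic_tsum_pow_mul_comp_nat_pow_mul (lam : ℝ) (b : ℕ) {g : ℝ → ℝ} {T : ℝ}
    (hg : Periodic g T) :
    Periodic (fun x => ∑' n : ℕ, lam ^ n * g (b ^ n * x)) T :=
  Periodic.tsum fun n x => by
    rw [mul_add, ← Nat.cast_pow, hg.nat_mul (b ^ n)]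

theorem stmt_19_general (b : ℕ) (p : ℕ) (hp : 1 < p)
    (lam : ℝ) (hlam : 1 / b < lam ∧ lam < 1)
    (φ : ℝ → ℝ) (hφ : ContDiff ℝ 5 φ) (hφp : ∀ x, φ (x + 1) = φ x)
    (c : ℤ → ℂ)
    (Rφ : ℝ → ℝ)
    (hR : ∀ x : ℝ, Rφ x = (∑' k : ℤ, c (k * p) *
      Complex.exp (2 * (Real.pi : ℂ) * Complex.I * (k : ℂ) * (p : ℂ) * (x : ℂ))).re)
    (Wφ Wψ : ℝ → ℝ)
    (hWφ : ∀ x, Wφ x = ∑' n : ℕ, lam ^ n * φ ((b : ℝ) ^ n * x))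
    (hWψ : ∀ x, Wψ x = ∑' n : ℕ, lam ^ n * (φ ((b : ℝ) ^ n * x) - Rφ ((b : ℝ) ^ n * x))) :
    ∀ x : ℝ, Wψ (x + 1 / (p : ℝ)) - Wψ x = Wφ (x + 1 / (p : ℝ)) - Wφ x := by
  have hlam_abs : |lam| < 1 :=
    abs_lt.2 ⟨by linarith [hlam.1, one_div_nonneg.2 (Nat.cast_nonneg (α := ℝ) b)], hlam.2⟩
  have hRper : Periodic Rφ (1 / p) := fun x => by
    rw [hR, hR]
    exact congrArg re (periodic_tsum_mul_exp_two_pi_I_mul_int_mul_nat_mul _ (by omega) x)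
  have hRbdd : IsBounded (range Rφ) := isBounded_iff_forall_norm_le.2
    ⟨_, forall_mem_range.2 fun x => by
      rw [hR]
      exact (abs_re_le_norm _).trans (norm_tsum_mul_exp_two_pi_I_mul_int_mul_nat_mul_le _ p x)⟩
  have hφbdd : IsBounded (range φ) :=
    Periodic.isBounded_of_continuous (c := 1) hφp one_ne_zero hφ.continuous
  have hWψ_eq : ∀ x, Wψ x = Wφ x - ∑' n : ℕ, lam ^ n * Rφ (b ^ n * x) := fun x => by
    rw [hWψ, hWφ, ← (summable_pow_mul_of_isBounded_range hlam_abs hφbdd _).tsum_sub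
      (summable_pow_mul_of_isBounded_range hlam_abs hRbdd _)]
    simp only [mul_sub]
  intro x
  rw [hWψ_eq, hWψ_eq, show ∑' n : ℕ, lam ^ n * Rφ (b ^ n * (x + 1 / p)) = _ from
    periodic_tsum_pow_mul_comp_nat_pow_mul lam b hRper x]
  ring

/-- Pre-renormalization: if `1/p` is a C³-regulating period of `W^φ`, then
`W^{φ - R̃ₚφ}(x + 1/p) - W^{φ - R̃ₚφ}(x) = W^φ(x + 1/p) - W^φ(x)` where
`R̃ₚφ(x) = ∑ₖ c_{kp} e^{2πikpx}`. -/
theorem stmt_19 (b : ℕ) (hb : 2 ≤ b) (p : ℕ) (hp : 1 < p)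
    (lam : ℝ) (hlam : 1 / b < lam ∧ lam < 1)
    (φ : ℝ → ℝ) (hφ : ContDiff ℝ 5 φ) (hφp : ∀ x, φ (x + 1) = φ x)
    (c : ℤ → ℂ)
    (hc : ∀ k : ℤ, c k = ∫ x in (0:ℝ)..1, (φ x : ℂ) *
      Complex.exp (-(2 * (Real.pi : ℂ) * Complex.I * (k : ℂ) * (x : ℂ))))
    (Rφ : ℝ → ℝ)
    (hR : ∀ x : ℝ, Rφ x = (∑' k : ℤ, c (k * p) *
      Complex.exp (2 * (Real.pi : ℂ) * Complex.I * (k : ℂ) * (p : ℂ) * (x : ℂ))).re)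
    (Wφ Wψ : ℝ → ℝ)
    (hWφ : ∀ x, Wφ x = ∑' n : ℕ, lam ^ n * φ ((b : ℝ) ^ n * x))
    (hWψ : ∀ x, Wψ x = ∑' n : ℕ, lam ^ n * (φ ((b : ℝ) ^ n * x) - Rφ ((b : ℝ) ^ n * x)))
    (hreg : ContDiff ℝ 3 (fun x => Wφ (x + 1 / (p : ℝ)) - Wφ x)) :
    ∀ x : ℝ, Wψ (x + 1 / (p : ℝ)) - Wψ x = Wφ (x + 1 / (p : ℝ)) - Wφ x :=
  stmt_19_general b p hp lam hlam φ hφ hφp c Rφ hR Wφ Wψ hWφ hWψ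
end
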